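/- arXiv:1803.03083 — 6 statements merged into one kernel-verified Lean document; each statement's English description precedes it below -/
import Mathlib

section
/- If q is odd and p(x) is a self-reciprocal monic polynomial over F_q, then the multiplicity of the factor (x - 1) in p(x) is even. -/
open Polynomial

lemma reverse_one' {F : Type*} [Field F] : (1 : F[X]).reverse = 1 := by
  simpa using reverse_C (1 : F)

lemma reverse_X_sub_C_one {F : Type*} [Field F] :
    (X - C (1 : F)).reverse = -(X - C 1) := by
  have h : (X - C (1 : F)) = X + C (-1) := by rw [map_neg, sub_eq_add_neg]
  have hX : (X : F[X]).reverse = 1 := by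
    simpa [reverse_one'] using reverse_X_mul (1 : F[X])
  rw [h, reverse_add_C, hX, natDegree_X, map_neg, C_1]
  ring

lemma eval_one_reverse {F : Type*} [Field F] (f : F[X]) :
    f.reverse.eval 1 = f.eval 1 := by
  letI : Invertible (1 : F) := invertibleOne
  have h := eval₂_reverse_mul_pow (RingHom.id F) (1 : F) f
  rw [invOf_one, one_pow, mul_one] at h
  exact h

/-- If `q` is odd and `p` is a self-reciprocal monic polynomial over `F_q`, then
the multiplicity of the factor `x - 1` in `p` is even. -/
theorem even_multiplicity_of_X_sub_one {F : Type*} [Field F] [Fintype F]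
    (hq : Odd (Fintype.card F)) (p : F[X]) (hmon : p.Monic) (hsr : p.reverse = p) :
    Even (p.rootMultiplicity 1) := by
  set k := p.rootMultiplicity 1 with hk
  set g := p /ₘ (X - C 1) ^ k with hg
  have hp0 : p ≠ 0 := hmon.ne_zero
  have hfac : (X - C (1:F)) ^ k * g = p :=
    pow_mul_divByMonic_rootMultiplicity_eq p 1
  have hg1 : g.eval 1 ≠ 0 :=
    eval_divByMonic_pow_rootMultiplicity_ne_zero 1 hp0
  have hrev : ((X - C (1:F)) ^ k).reverse * g.reverse = p := by
    rw [← reverse_mul_of_domain, hfac, hsr]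
  have hrevpow : ((X - C (1:F)) ^ k).reverse = (-1) ^ k * (X - C 1) ^ k := by
    induction k with
    | zero => simp [reverse_one']
    | succ n ih =>
        rw [pow_succ, reverse_mul_of_domain, ih, reverse_X_sub_C_one]
        ring
  rw [hrevpow] at hrev
  have hcancel : (-1 : F[X]) ^ k * g.reverse = g := by
    have hne : ((X - C (1:F)) ^ k) ≠ 0 := pow_ne_zero _ (X_sub_C_ne_zero 1)
    apply mul_left_cancel₀ hne
    rw [hfac.symm] at hrev
    linear_combination hrev
  have heval := congrArg (eval 1) hcancel
  simp only [eval_mul, eval_pow, eval_neg, eval_one, eval_one_reverse] at heval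
  have hpm : ((-1 : F)) ^ k = 1 :=
    mul_right_cancel₀ hg1 (by rw [one_mul]; exact heval)
  have hne : (-1 : F) ≠ 1 := by
    intro h
    have h2 : (2 : F) = 0 := by linear_combination -h
    have hdvd : ringChar F ∣ 2 := by
      have := (CharP.cast_eq_zero_iff F (ringChar F) 2).mp (by exact_mod_cast h2)
      exact this
    have hprime : (ringChar F).Prime := CharP.char_is_prime F (ringChar F)
    have hchar : ringChar F = 2 :=
      (Nat.prime_dvd_prime_iff_eq hprime Nat.prime_two).mp hdvd
    have heven := FiniteField.even_card_of_char_two (F := F) hchar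
    have hodd := Nat.odd_iff.mp hq
    omega
  rcases Nat.even_or_odd k with he | ho
  · exact he
  · exfalso
    rw [ho.neg_one_pow] at hpm
    exact hne hpm
end

section
/- For odd prime power q, the number N_2n(q) of self-reciprocal irreducible monic polynomials of degree 2n over F_q satisfies N_2n(q) = (1/(2n)) ∑_{d | n, d odd} μ(d) (q^{n/d} - 1). -/
/-!
Let `q = #F` be odd and `N = q ^ m + 1`. A root `x ≠ ±1` of a monic irreducible `p` over `F`
has its Frobenius conjugates `x ^ q ^ i` as the other roots, and `p` is self-reciprocal exactly
when `x⁻¹` is among them. Since `x ^ q ^ i = x` iff `deg p ∣ i`, this forces `deg p = 2 d` with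
`x ^ q ^ d = x⁻¹`, and then `x ^ q ^ m = x⁻¹` (i.e. `x ^ N = 1`) iff `m ≡ d [MOD 2 d]`.
So the `N` roots of `X ^ N - 1` in `F̄` are `±1` together with the roots of the self-reciprocal
irreducible monic polynomials of degree `2 d`, `d ∣ m`, `m / d` odd:
`q ^ m - 1 = ∑_{d ∣ m, m / d odd} 2 d N_{2d}`. Writing `m = 2 ^ a v` with `v` odd, this is a
divisor sum over `v`, and Möbius inversion on the odd numbers gives the formula.
-/

open Polynomial IntermediateField
open scoped ArithmeticFunction.Moebius

section Minpoly

variable {F K : Type*} [Field F] [Field K] [Algebra F K]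

theorem ne_algebraMap_of_natDegree_minpoly_ne_one {α : K} (h : (minpoly F α).natDegree ≠ 1)
    (a : F) : α ≠ algebraMap F K a := by
  rintro rfl
  exact h (minpoly.natDegree_eq_one_iff.mpr ⟨a, rfl⟩)

theorem ne_zero_of_natDegree_minpoly_ne_one {α : K} (h : (minpoly F α).natDegree ≠ 1) :
    α ≠ 0 := by
  simpa using ne_algebraMap_of_natDegree_minpoly_ne_one h 0

theorem ne_inv_of_natDegree_minpoly_ne_one {α : K} (h : (minpoly F α).natDegree ≠ 1) :
    α ≠ α⁻¹ := by
  intro hα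
  have hα' := (mul_eq_one_iff_eq_inv₀ (ne_zero_of_natDegree_minpoly_ne_one h)).mpr hα
  rcases mul_self_eq_one_iff.mp hα' with h1 | h1
  · exact ne_algebraMap_of_natDegree_minpoly_ne_one h 1 (by simpa using h1)
  · exact ne_algebraMap_of_natDegree_minpoly_ne_one h (-1) (by simpa using h1)

theorem minpoly_reverse_eq_self_iff {α : K} (hα : IsIntegral F α) (h0 : α ≠ 0)
    (h1 : α ≠ 1) :
    (minpoly F α).reverse = minpoly F α ↔ aeval α⁻¹ (minpoly F α) = 0 := by
  set p := minpoly F α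
  have hp : p.Monic := minpoly.monic hα
  have : Invertible α⁻¹ := invertibleOfNonzero (inv_ne_zero h0)
  have hroot : aeval α⁻¹ p = 0 ↔ aeval α p.reverse = 0 := by
    rw [aeval_def, aeval_def, ← eval₂_reverse_eq_zero_iff, invOf_eq_inv, inv_inv]
  refine ⟨fun h => hroot.mpr (by rw [h]; exact minpoly.aeval F α), fun h => ?_⟩
  have hrev : p.reverse = p * C (p.coeff 0) := by
    have := eq_mul_leadingCoeff_of_monic_of_dvd_of_natDegree_le hp
      (minpoly.dvd F α (hroot.mp h)) (reverse_natDegree_le p)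
    rwa [reverse_leadingCoeff, trailingCoeff, natTrailingDegree_eq_zero.mpr
      (Or.inr (minpoly.coeff_zero_ne_zero hα h0))] at this
  have hcc : p.coeff 0 * p.coeff 0 = 1 := by
    simpa [coeff_zero_reverse, hp.leadingCoeff, coeff_mul_C] using
      (congr_arg (coeff · 0) hrev).symm
  rcases mul_self_eq_one_iff.mp hcc with hc | hc
  · rw [hrev, hc, map_one, mul_one]
  by_cases hneg : (-1 : F) = 1
  · rw [hrev, hc, hneg, map_one, mul_one]
  -- `p.reverse = -p` forces `p(1) = 0`, so `p = minpoly F 1` and `α = 1`.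
  have : Invertible (1 : F) := invertibleOne
  have heval := eval₂_reverse_mul_pow (RingHom.id F) 1 p
  rw [invOf_one, one_pow, mul_one, hrev, hc, eval₂_mul, eval₂_C, RingHom.id_apply,
    mul_neg_one, neg_eq_iff_eq_neg] at heval
  change eval 1 p = -eval 1 p at heval
  have h2 : (2 : F) ≠ 0 := fun h2 => hneg (by linear_combination -h2)
  have hp1 : aeval (1 : K) p = 0 := by
    have : (2 : F) * eval 1 p = 0 := by linear_combination heval
    rw [← map_one (algebraMap F K), aeval_algebraMap_apply, coe_aeval_eq_eval,
      (mul_eq_zero.mp this).resolve_left h2, map_zero]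
  have hp_one : p = minpoly F (1 : K) :=
    minpoly.eq_of_irreducible_of_monic (minpoly.irreducible hα) hp1 hp
  have hα1 : aeval α p = 0 := minpoly.aeval F α
  rw [hp_one, minpoly.one, map_sub, aeval_X, map_one, sub_eq_zero] at hα1
  exact absurd hα1 h1

theorem card_eq_sum_natDegree_image_minpoly [IsAlgClosed K] [Algebra.IsSeparable F K]
    [DecidableEq F[X]] (S : Finset K) (hS : ∀ x ∈ S, ∀ y, IsConjRoot F x y → y ∈ S) :
    S.card = ∑ p ∈ S.image (minpoly F), p.natDegree := by
  classical
  rw [Finset.card_eq_sum_card_image (minpoly F) S]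
  refine Finset.sum_congr rfl fun p hp => ?_
  obtain ⟨x, hx, rfl⟩ := Finset.mem_image.mp hp
  have hfiber : {y ∈ S | minpoly F y = minpoly F x} = ((minpoly F x).aroots K).toFinset := by
    ext y
    rw [Finset.mem_filter, Multiset.mem_toFinset,
      ← isConjRoot_iff_mem_minpoly_aroots (Algebra.IsSeparable.isIntegral F x), isConjRoot_def]
    exact ⟨fun h => h.2.symm, fun h => ⟨hS x hx y h, h.symm⟩⟩
  rw [hfiber, Multiset.toFinset_card_of_nodup
    (nodup_roots (Separable.map (Algebra.IsSeparable.isSeparable F x))),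
    IsAlgClosed.card_aroots_eq_natDegree]

end Minpoly

def selfReciprocalIrreducibleMonic (F : Type*) [Field F] (k : ℕ) : Set F[X] :=
  {p | Irreducible p ∧ p.Monic ∧ p.natDegree = 2 * k ∧ p.reverse = p}

theorem sum_natDegree_eq_sum_mul_ncard {F : Type*} [Field F] {T : Finset F[X]} {D : Finset ℕ}
    (hT : ∀ p, p ∈ T ↔ ∃ d ∈ D, p ∈ selfReciprocalIrreducibleMonic F d) :
    ∑ p ∈ T, p.natDegree = ∑ d ∈ D, 2 * d * (selfReciprocalIrreducibleMonic F d).ncard := by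
  classical
  have hhalf : ∀ {p d}, p ∈ selfReciprocalIrreducibleMonic F d → p.natDegree / 2 = d :=
    fun hp => by rw [hp.2.2.1]; omega
  have hfiber : ∀ d ∈ D,
      (↑({p ∈ T | p.natDegree / 2 = d} : Finset F[X]) : Set F[X]) =
        selfReciprocalIrreducibleMonic F d := by
    intro d hd
    ext p
    rw [Finset.mem_coe, Finset.mem_filter, hT]
    refine ⟨?_, fun hp => ⟨⟨d, hd, hp⟩, hhalf hp⟩⟩
    rintro ⟨⟨d', -, hp⟩, rfl⟩
    rwa [hhalf hp]
  have hmaps : ∀ p ∈ T, p.natDegree / 2 ∈ D := fun p hp => by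
    obtain ⟨d, hd, hpd⟩ := (hT p).mp hp
    rwa [hhalf hpd]
  rw [← Finset.sum_fiberwise_of_maps_to hmaps]
  refine Finset.sum_congr rfl fun d hd => ?_
  rw [Finset.sum_const_nat (m := 2 * d), ← Set.ncard_coe_finset, hfiber d hd, mul_comm]
  intro p hp
  exact (hfiber d hd ▸ Finset.mem_coe.mpr hp : p ∈ selfReciprocalIrreducibleMonic F d).2.2.1

theorem modEq_two_mul_iff_dvd_and_odd_div {n d : ℕ} (hd : 0 < d) :
    n ≡ d [MOD 2 * d] ↔ d ∣ n ∧ Odd (n / d) := by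
  rw [mul_comm, Nat.ModEq, Nat.mod_eq_of_lt (show d < d * 2 by omega), Nat.mod_mul, Nat.odd_iff,
    Nat.dvd_iff_mod_eq_zero]
  have := Nat.mod_lt n hd
  rcases Nat.mod_two_eq_zero_or_one (n / d) with h | h <;> simp [h]
  omega

section Frobenius

variable {F K : Type*} [Field F] [Fintype F] [Field K] [Algebra F K]

theorem frobeniusAlgHom_pow_apply (i : ℕ) (x : K) :
    (FiniteField.frobeniusAlgHom F K ^ i) x = x ^ Fintype.card F ^ i := by
  rw [AlgHom.coe_pow, FiniteField.coe_frobeniusAlgHom, pow_iterate]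

theorem pow_card_pow_eq_self_iff {α : K} (hα : IsIntegral F α) (j : ℕ) :
    α ^ Fintype.card F ^ j = α ↔ (minpoly F α).natDegree ∣ j := by
  have := adjoin.finiteDimensional hα
  have : Finite F⟮α⟯ := Module.finite_of_finite F
  rw [← adjoin.finrank hα, ← FiniteField.orderOf_frobeniusAlgHom F F⟮α⟯,
    orderOf_dvd_iff_pow_eq_one]
  constructor
  · intro h
    refine adjoin_algHom_ext F fun x hx => Subtype.ext ?_
    obtain rfl := Set.mem_singleton_iff.mp hx
    simpa [frobeniusAlgHom_pow_apply] using h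
  · intro h
    simpa [frobeniusAlgHom_pow_apply] using
      congr_arg Subtype.val (DFunLike.congr_fun h (AdjoinSimple.gen F α))

theorem pow_card_pow_eq_pow_card_pow_iff {α : K} (hα : IsIntegral F α) {i j : ℕ} :
    α ^ Fintype.card F ^ i = α ^ Fintype.card F ^ j ↔
      i ≡ j [MOD (minpoly F α).natDegree] := by
  wlog hij : i ≤ j generalizing i j
  · rw [eq_comm, Nat.ModEq.comm]; exact this (le_of_not_ge hij)
  obtain ⟨k, rfl⟩ := Nat.exists_eq_add_of_le hij
  rw [Nat.modEq_iff_dvd' hij, Nat.add_sub_cancel_left, ← pow_card_pow_eq_self_iff hα,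
    ← frobeniusAlgHom_pow_apply, ← frobeniusAlgHom_pow_apply, pow_add, AlgHom.mul_apply]
  exact (FiniteField.frobeniusAlgHom F K ^ i).injective.eq_iff.trans <| by
    rw [frobeniusAlgHom_pow_apply, eq_comm]

theorem aeval_pow_card_pow_minpoly (α : K) (i : ℕ) :
    aeval (α ^ Fintype.card F ^ i) (minpoly F α) = 0 := by
  rw [← frobeniusAlgHom_pow_apply, aeval_algHom_apply, minpoly.aeval, map_zero]

theorem exists_pow_card_pow_eq_of_aeval_minpoly_eq_zero {α β : K} (hα : IsIntegral F α)
    (hβ : aeval β (minpoly F α) = 0) : ∃ i, α ^ Fintype.card F ^ i = β := by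
  classical
  set m := (minpoly F α).natDegree
  set orbit := (Finset.range m).image fun i => α ^ Fintype.card F ^ i
  have hcard : orbit.card = m := by
    rw [Finset.card_image_of_injOn, Finset.card_range]
    intro i hi j hj hij
    exact ((pow_card_pow_eq_pow_card_pow_iff hα).mp hij).eq_of_lt_of_lt
      (Finset.mem_range.mp hi) (Finset.mem_range.mp hj)
  have horbit : orbit ⊆ ((minpoly F α).aroots K).toFinset := by
    simp only [orbit, Finset.image_subset_iff, Multiset.mem_toFinset, mem_aroots]
    exact fun i _ => ⟨minpoly.ne_zero hα, aeval_pow_card_pow_minpoly α i⟩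
  have heq := Finset.eq_of_subset_of_card_le horbit <| by
    rw [hcard]
    exact (Multiset.toFinset_card_le _).trans (card_roots_map_le_natDegree _)
  have hβ' : β ∈ orbit :=
    heq ▸ Multiset.mem_toFinset.mpr (mem_aroots.mpr ⟨minpoly.ne_zero hα, hβ⟩)
  obtain ⟨i, -, hi⟩ := Finset.mem_image.mp hβ'
  exact ⟨i, hi⟩

theorem exists_natDegree_minpoly_eq_two_mul {α : K} (hα : IsIntegral F α) {i : ℕ}
    (hi : α ^ Fintype.card F ^ i = α⁻¹) (hα_inv : α ≠ α⁻¹) :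
    ∃ d, (minpoly F α).natDegree = 2 * d ∧ α ^ Fintype.card F ^ d = α⁻¹ := by
  set m := (minpoly F α).natDegree
  set d := i % m
  have hd : α ^ Fintype.card F ^ d = α⁻¹ :=
    hi ▸ (pow_card_pow_eq_pow_card_pow_iff hα).mpr (Nat.mod_modEq i m)
  have h2d : m ∣ d + d := by
    rw [← pow_card_pow_eq_self_iff hα, pow_add, pow_mul, hd, inv_pow, hd, inv_inv]
  have hd0 : d ≠ 0 := fun h => hα_inv (by rw [← hd, h, pow_zero, pow_one])
  have hdm : d < m := Nat.mod_lt i (minpoly.natDegree_pos hα)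
  have hm : m = d + d := Nat.eq_of_dvd_of_lt_two_mul (by omega) h2d (by omega) |>.symm
  exact ⟨d, hm.trans (two_mul d).symm, hd⟩

theorem pow_card_pow_eq_inv_iff {α : K} (hα : IsIntegral F α) {d : ℕ}
    (hdeg : (minpoly F α).natDegree = 2 * d) (hd : α ^ Fintype.card F ^ d = α⁻¹) (n : ℕ) :
    α ^ Fintype.card F ^ n = α⁻¹ ↔ d ∣ n ∧ Odd (n / d) := by
  have hd0 : 0 < d := by have := minpoly.natDegree_pos hα; omega
  rw [← hd, pow_card_pow_eq_pow_card_pow_iff hα, hdeg, modEq_two_mul_iff_dvd_and_odd_div hd0]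

theorem minpoly_reverse_eq_self_iff_pow_card_pow_eq_inv {α : K} (hα : IsIntegral F α) {d : ℕ}
    (hdeg : (minpoly F α).natDegree = 2 * d) :
    (minpoly F α).reverse = minpoly F α ↔ α ^ Fintype.card F ^ d = α⁻¹ := by
  have h1 : (minpoly F α).natDegree ≠ 1 := by omega
  rw [minpoly_reverse_eq_self_iff hα (ne_zero_of_natDegree_minpoly_ne_one h1)
    (by simpa using ne_algebraMap_of_natDegree_minpoly_ne_one h1 1)]
  refine ⟨fun h => ?_, fun hd => hd ▸ aeval_pow_card_pow_minpoly α d⟩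
  obtain ⟨i, hi⟩ := exists_pow_card_pow_eq_of_aeval_minpoly_eq_zero hα h
  obtain ⟨d', hdeg', hd'⟩ :=
    exists_natDegree_minpoly_eq_two_mul hα hi (ne_inv_of_natDegree_minpoly_ne_one h1)
  obtain rfl : d' = d := by omega
  exact hd'

theorem pow_card_pow_eq_inv_iff_exists_minpoly_mem {α : K} (hα : IsIntegral F α)
    (h1 : (minpoly F α).natDegree ≠ 1) (n : ℕ) :
    α ^ Fintype.card F ^ n = α⁻¹ ↔
      ∃ d, (d ∣ n ∧ Odd (n / d)) ∧ minpoly F α ∈ selfReciprocalIrreducibleMonic F d := by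
  constructor
  · intro hn
    obtain ⟨d, hdeg, hd⟩ :=
      exists_natDegree_minpoly_eq_two_mul hα hn (ne_inv_of_natDegree_minpoly_ne_one h1)
    exact ⟨d, (pow_card_pow_eq_inv_iff hα hdeg hd n).mp hn, minpoly.irreducible hα,
      minpoly.monic hα, hdeg, (minpoly_reverse_eq_self_iff_pow_card_pow_eq_inv hα hdeg).mpr hd⟩
  · rintro ⟨d, hdn, -, -, hdeg, hrev⟩
    exact (pow_card_pow_eq_inv_iff hα hdeg
      ((minpoly_reverse_eq_self_iff_pow_card_pow_eq_inv hα hdeg).mp hrev) n).mpr hdn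

theorem natDegree_minpoly_eq_one_iff_of_pow_eq_one {m : ℕ} {x : K}
    (hx : x ^ (Fintype.card F ^ m + 1) = 1) :
    (minpoly F x).natDegree = 1 ↔ x = 1 ∨ x = -1 := by
  rw [minpoly.natDegree_eq_one_iff]
  constructor
  · rintro ⟨a, rfl⟩
    rw [pow_succ, ← map_pow, FiniteField.pow_card_pow, ← map_mul, ← map_one (algebraMap F K),
      (algebraMap F K).injective.eq_iff, mul_self_eq_one_iff] at hx
    rcases hx with rfl | rfl <;> simp
  · rintro (rfl | rfl)
    exacts [one_mem _, neg_mem (one_mem _)]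

theorem mem_image_minpoly_nthRootsFinset_iff [IsAlgClosed K] [Algebra.IsIntegral F K]
    [DecidableEq F[X]] {m : ℕ} (hm : 0 < m) (p : F[X]) :
    p ∈ {x ∈ nthRootsFinset (Fintype.card F ^ m + 1) (1 : K) |
        (minpoly F x).natDegree ≠ 1}.image (minpoly F) ↔
      ∃ d ∈ {d ∈ m.divisors | Odd (m / d)}, p ∈ selfReciprocalIrreducibleMonic F d := by
  have hroot : ∀ x : K, (minpoly F x).natDegree ≠ 1 →
      (x ^ (Fintype.card F ^ m + 1) = 1 ↔ x ^ Fintype.card F ^ m = x⁻¹) := fun x h1 => by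
    rw [pow_succ, mul_eq_one_iff_eq_inv₀ (ne_zero_of_natDegree_minpoly_ne_one h1)]
  simp only [Finset.mem_image, Finset.mem_filter, mem_nthRootsFinset (Nat.succ_pos _),
    Nat.mem_divisors]
  constructor
  · rintro ⟨x, ⟨hxN, h1⟩, rfl⟩
    obtain ⟨d, ⟨hdm, hodd⟩, hp⟩ := (pow_card_pow_eq_inv_iff_exists_minpoly_mem
      (Algebra.IsIntegral.isIntegral x) h1 m).mp ((hroot x h1).mp hxN)
    exact ⟨d, ⟨⟨hdm, hm.ne'⟩, hodd⟩, hp⟩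
  · rintro ⟨d, ⟨⟨hdm, -⟩, hodd⟩, hp⟩
    have hdeg : p.natDegree = 2 * d := hp.2.2.1
    have hd0 : 0 < d := Nat.pos_of_dvd_of_pos hdm hm
    obtain ⟨x, hx⟩ := IsAlgClosed.exists_aeval_eq_zero K p
      (ne_of_gt (natDegree_pos_iff_degree_pos.mp (by omega)))
    obtain rfl : p = minpoly F x := minpoly.eq_of_irreducible_of_monic hp.1 hx hp.2.1
    have h1 : (minpoly F x).natDegree ≠ 1 := by omega
    exact ⟨x, ⟨(hroot x h1).mpr ((pow_card_pow_eq_inv_iff_exists_minpoly_mem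
      (Algebra.IsIntegral.isIntegral x) h1 m).mpr ⟨d, ⟨hdm, hodd⟩, hp⟩), h1⟩, rfl⟩

end Frobenius

theorem card_pow_add_one_eq_sum {F : Type*} [Field F] [Fintype F] (hq : Odd (Fintype.card F))
    {m : ℕ} (hm : 0 < m) :
    Fintype.card F ^ m + 1 = 2 + ∑ d ∈ {d ∈ m.divisors | Odd (m / d)},
      2 * d * (selfReciprocalIrreducibleMonic F d).ncard := by
  classical
  set K := AlgebraicClosure F
  set N := Fintype.card F ^ m + 1
  have : NeZero (N : F) := ⟨by
    simp only [N, Nat.cast_add, Nat.cast_pow, FiniteField.cast_card_eq_zero, zero_pow hm.ne',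
      Nat.cast_one, zero_add, ne_eq, one_ne_zero, not_false_eq_true]⟩
  obtain ⟨ζ, hζ⟩ := HasEnoughRootsOfUnity.exists_primitiveRoot K N
  set S := nthRootsFinset N (1 : K)
  have hS : ∀ x, x ∈ S ↔ x ^ N = 1 := fun x => mem_nthRootsFinset (Nat.succ_pos _) 1
  have hlinear : {x ∈ S | (minpoly F x).natDegree = 1} = {1, -1} := by
    ext x
    simp only [Finset.mem_filter, hS, Finset.mem_insert, Finset.mem_singleton]
    refine ⟨fun hx => (natDegree_minpoly_eq_one_iff_of_pow_eq_one hx.1).mp hx.2, fun hx => ?_⟩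
    have hxN : x ^ N = 1 := by
      rcases hx with rfl | rfl
      exacts [one_pow N, hq.pow.add_one.neg_one_pow]
    exact ⟨hxN, (natDegree_minpoly_eq_one_iff_of_pow_eq_one hxN).mpr hx⟩
  have hconj : ∀ x ∈ {x ∈ S | (minpoly F x).natDegree ≠ 1}, ∀ y, IsConjRoot F x y →
      y ∈ {x ∈ S | (minpoly F x).natDegree ≠ 1} := by
    intro x hx y hxy
    simp only [Finset.mem_filter, hS] at hx ⊢
    refine ⟨?_, hxy ▸ hx.2⟩
    have hdvd : minpoly F x ∣ X ^ N - 1 := minpoly.dvd F x (by simp [hx.1])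
    simpa [sub_eq_zero] using aeval_eq_zero_of_dvd_aeval_eq_zero hdvd hxy.aeval_eq_zero
  have h2 : (2 : K) ≠ 0 := by
    have : (2 : F) ≠ 0 := Ring.two_ne_zero (by
      rw [Ne, FiniteField.even_card_iff_char_two, Nat.odd_iff.mp hq]; exact one_ne_zero)
    simpa only [map_ofNat] using (map_ne_zero (algebraMap F K)).mpr this
  rw [← hζ.card_nthRootsFinset, ← Finset.card_filter_add_card_filter_not
    (fun x => (minpoly F x).natDegree = 1), hlinear, card_eq_sum_natDegree_image_minpoly _ hconj,
    sum_natDegree_eq_sum_mul_ncard (mem_image_minpoly_nthRootsFinset_iff hm),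
    Finset.card_pair_eq_two_iff.mpr fun h => h2 (by linear_combination h)]

theorem filter_divisors_two_pow_mul_odd_div {a v : ℕ} (hv : Odd v) :
    {d ∈ (2 ^ a * v).divisors | Odd (2 ^ a * v / d)} = v.divisors.image (2 ^ a * ·) := by
  ext d
  simp only [Finset.mem_filter, Nat.mem_divisors, Finset.mem_image]
  constructor
  · rintro ⟨⟨hd, -⟩, hodd⟩
    have hdc : d * (2 ^ a * v / d) = 2 ^ a * v := Nat.mul_div_cancel' hd
    generalize 2 ^ a * v / d = c at hodd hdc
    obtain ⟨e, rfl⟩ : 2 ^ a ∣ d :=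
      ((Nat.coprime_two_left.mpr hodd).pow_left a).dvd_of_dvd_mul_right (hdc ▸ dvd_mul_right _ _)
    rw [mul_assoc] at hdc
    exact ⟨e, ⟨⟨c, (Nat.eq_of_mul_eq_mul_left (by positivity) hdc).symm⟩, hv.pos.ne'⟩,
      rfl⟩
  · rintro ⟨e, ⟨he, -⟩, rfl⟩
    refine ⟨⟨mul_dvd_mul_left _ he, by have := hv.pos; positivity⟩, ?_⟩
    rw [Nat.mul_div_mul_left _ _ (by positivity)]
    exact hv.of_dvd_nat (Nat.div_dvd_of_dvd he)

theorem filter_divisors_two_pow_mul_odd {a v : ℕ} (hv : Odd v) :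
    {d ∈ (2 ^ a * v).divisors | Odd d} = v.divisors := by
  ext d
  simp only [Finset.mem_filter, Nat.mem_divisors]
  constructor
  · rintro ⟨⟨hd, -⟩, hodd⟩
    exact ⟨((Nat.coprime_two_right.mpr hodd).pow_right a).dvd_of_dvd_mul_left hd,
      hv.pos.ne'⟩
  · rintro ⟨hd, -⟩
    exact ⟨⟨hd.mul_left _, by have := hv.pos; positivity⟩, hv.of_dvd_nat hd⟩

theorem sum_odd_divisors_moebius_smul_eq {R : Type*} [AddCommGroup R] {f g : ℕ → R}
    (h : ∀ m, 0 < m → ∑ d ∈ {d ∈ m.divisors | Odd (m / d)}, f d = g m) {n : ℕ}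
    (hn : 0 < n) :
    ∑ d ∈ {d ∈ n.divisors | Odd d}, μ d • g (n / d) = f n := by
  obtain ⟨a, u, hu, rfl⟩ := Nat.exists_eq_two_pow_mul_odd hn.ne'
  have hodd : ∀ v > 0, v ∈ {v : ℕ | Odd v} →
      ∑ e ∈ v.divisors, f (2 ^ a * e) = g (2 ^ a * v) := fun v hv hv_odd => by
    rw [← h _ (by positivity), filter_divisors_two_pow_mul_odd_div hv_odd, Finset.sum_image
      fun x _ y _ hxy => Nat.eq_of_mul_eq_mul_left (by positivity) hxy]
  have := (ArithmeticFunction.sum_eq_iff_sum_smul_moebius_eq_on {v : ℕ | Odd v}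
    fun _ _ hdvd hodd => Odd.of_dvd_nat hodd hdvd).mp hodd u hu.pos hu
  rw [Nat.sum_divisorsAntidiagonal (fun x y => μ x • g (2 ^ a * y))] at this
  rw [filter_divisors_two_pow_mul_odd hu, ← this]
  refine Finset.sum_congr rfl fun d hd => ?_
  rw [Nat.mul_div_assoc _ (Nat.dvd_of_mem_divisors hd)]

theorem card_selfReciprocal_irreducible_monic_general {F : Type*} [Field F] [Fintype F]
    (hq : Odd (Fintype.card F)) (n : ℕ) :
    ((2 * n : ℕ) : ℤ) * ({p : F[X] | Irreducible p ∧ p.Monic ∧ p.natDegree = 2 * n ∧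
        p.reverse = p}.ncard : ℤ)
      = ∑ d ∈ n.divisors.filter (fun d => Odd d),
          (ArithmeticFunction.moebius d : ℤ) * ((Fintype.card F : ℤ) ^ (n / d) - 1) := by
  rcases n.eq_zero_or_pos with rfl | hn
  · simp
  refine (sum_odd_divisors_moebius_smul_eq (g := fun m => (Fintype.card F : ℤ) ^ m - 1)
    (f := fun m => ((2 * m : ℕ) : ℤ) * (selfReciprocalIrreducibleMonic F m).ncard)
    (fun m hm => ?_) hn).symm
  have := card_pow_add_one_eq_sum (F := F) hq hm
  zify at this
  push_cast at this ⊢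
  linarith

/-- For odd prime power `q`, the number of self-reciprocal irreducible monic
polynomials of degree `2n` over `F_q` equals
`(1/(2n)) ∑_{d ∣ n, d odd} μ(d) (q^{n/d} - 1)`. -/
theorem card_selfReciprocal_irreducible_monic {F : Type*} [Field F] [Fintype F]
    (hq : Odd (Fintype.card F)) (n : ℕ) (hn : 1 ≤ n) :
    ((2 * n : ℕ) : ℤ) * ({p : F[X] | Irreducible p ∧ p.Monic ∧ p.natDegree = 2 * n ∧
        p.reverse = p}.ncard : ℤ)
      = ∑ d ∈ n.divisors.filter (fun d => Odd d),
          (ArithmeticFunction.moebius d : ℤ) * ((Fintype.card F : ℤ) ^ (n / d) - 1) :=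
  card_selfReciprocal_irreducible_monic_general hq n
end

section
/- For odd q and even n ≥ 2, the counts satisfy IM_n(q) = 2·SRIM⁻_n(q) − SRIM⁻_{n/2}(q), where IM_n(q) = (1/n) ∑_{d|n} μ(d)(q^{n/d} − 1) and SRIM⁻_n(q) = (1/(2n)) ∑_{d | n, d odd} μ(d)(q^{n/d} − 1); and for odd n, IM_n(q) = 2·SRIM⁻_n(q). -/
/-!
Split the divisors of `2m` into odd and even ones. The even divisors are the `2e` with `e ∣ m`,
and `μ (2e)` is `-μ e` for odd `e` and `0` for even `e`, so the even part of the Möbius sum for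
`2m` is minus the odd part of the one for `m`. For odd `n` every divisor is odd.
-/

open ArithmeticFunction Finset
open scoped ArithmeticFunction.Moebius

namespace ArithmeticFunction

theorem moebius_prime_mul_of_dvd {p e : ℕ} (hp : p.Prime) (he : p ∣ e) : μ (p * e) = 0 :=
  moebius_eq_zero_of_not_squarefree fun h =>
    hp.one_lt.ne' (Nat.isUnit_iff.mp (h p (mul_dvd_mul_left p he)))

theorem moebius_prime_mul_of_not_dvd {p e : ℕ} (hp : p.Prime) (he : ¬p ∣ e) :
    μ (p * e) = -μ e := by
  rw [isMultiplicative_moebius.map_mul_of_coprime ((Nat.Prime.coprime_iff_not_dvd hp).mpr he),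
    moebius_apply_prime hp, neg_one_mul]

end ArithmeticFunction

theorem Nat.filter_dvd_divisors_mul_left {p : ℕ} (hp : p ≠ 0) (m : ℕ) :
    (p * m).divisors.filter (p ∣ ·) = m.divisors.image (p * ·) := by
  ext d
  simp only [mem_filter, Nat.mem_divisors, mem_image, mul_ne_zero_iff, ne_eq]
  constructor
  · rintro ⟨⟨hd, hp, hm⟩, e, rfl⟩
    exact ⟨e, ⟨(Nat.mul_dvd_mul_iff_left (Nat.pos_of_ne_zero hp)).mp hd, hm⟩, rfl⟩
  · rintro ⟨e, ⟨he, hm⟩, rfl⟩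
    exact ⟨⟨mul_dvd_mul_left p he, hp, hm⟩, dvd_mul_right p e⟩

theorem Nat.filter_odd_divisors_of_odd {n : ℕ} (hn : Odd n) :
    n.divisors.filter (fun d => Odd d) = n.divisors :=
  filter_true_of_mem fun _ hd => hn.of_dvd_nat (Nat.dvd_of_mem_divisors hd)

section MoebiusSums

variable {R : Type*} [CommRing R]

theorem sum_filter_dvd_divisors_prime_mul_moebius {p : ℕ} (hp : p.Prime) (m : ℕ)
    (f : ℕ → R) :
    ∑ d ∈ (p * m).divisors.filter (p ∣ ·), (μ d : R) * f (p * m / d) =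
      -∑ d ∈ m.divisors.filter (¬p ∣ ·), (μ d : R) * f (m / d) := by
  rw [Nat.filter_dvd_divisors_mul_left hp.ne_zero,
    sum_image fun _ _ _ _ h => Nat.eq_of_mul_eq_mul_left hp.pos h,
    ← sum_filter_add_sum_filter_not m.divisors (p ∣ ·), ← sum_neg_distrib]
  simp only [Nat.mul_div_mul_left _ _ hp.pos]
  rw [sum_eq_zero fun e he => by
      rw [moebius_prime_mul_of_dvd hp (mem_filter.mp he).2, Int.cast_zero, zero_mul],
    zero_add]
  refine sum_congr rfl fun e he => ?_
  rw [moebius_prime_mul_of_not_dvd hp (mem_filter.mp he).2, Int.cast_neg, neg_mul]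

theorem sum_divisors_prime_mul_moebius {p : ℕ} (hp : p.Prime) (m : ℕ) (f : ℕ → R) :
    ∑ d ∈ (p * m).divisors, (μ d : R) * f (p * m / d) =
      ∑ d ∈ (p * m).divisors.filter (¬p ∣ ·), (μ d : R) * f (p * m / d) -
        ∑ d ∈ m.divisors.filter (¬p ∣ ·), (μ d : R) * f (m / d) := by
  rw [← sum_filter_not_add_sum_filter _ (p ∣ ·), sum_filter_dvd_divisors_prime_mul_moebius hp,
    sub_eq_add_neg]

theorem sum_divisors_two_mul_moebius (m : ℕ) (f : ℕ → R) :
    ∑ d ∈ (2 * m).divisors, (μ d : R) * f (2 * m / d) =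
      ∑ d ∈ (2 * m).divisors.filter (fun d => Odd d), (μ d : R) * f (2 * m / d) -
        ∑ d ∈ m.divisors.filter (fun d => Odd d), (μ d : R) * f (m / d) := by
  simpa only [Nat.two_dvd_ne_zero, ← Nat.odd_iff] using
    sum_divisors_prime_mul_moebius Nat.prime_two m f

end MoebiusSums

theorem im_srim_moebius_identity_general (q n : ℕ) :
    (Even n →
      (1 / (n : ℚ)) * ∑ d ∈ n.divisors,
          ((ArithmeticFunction.moebius d : ℤ) : ℚ) * ((q : ℚ) ^ (n / d) - 1)
        = 2 * ((1 / (2 * (n : ℚ))) * ∑ d ∈ n.divisors.filter (fun d => Odd d),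
            ((ArithmeticFunction.moebius d : ℤ) : ℚ) * ((q : ℚ) ^ (n / d) - 1))
          - (1 / (2 * ((n / 2 : ℕ) : ℚ))) *
              ∑ d ∈ (n / 2).divisors.filter (fun d => Odd d),
                ((ArithmeticFunction.moebius d : ℤ) : ℚ) * ((q : ℚ) ^ ((n / 2) / d) - 1)) ∧
    (Odd n →
      (1 / (n : ℚ)) * ∑ d ∈ n.divisors,
          ((ArithmeticFunction.moebius d : ℤ) : ℚ) * ((q : ℚ) ^ (n / d) - 1)
        = 2 * ((1 / (2 * (n : ℚ))) * ∑ d ∈ n.divisors.filter (fun d => Odd d),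
            ((ArithmeticFunction.moebius d : ℤ) : ℚ) * ((q : ℚ) ^ (n / d) - 1))) := by
  refine ⟨fun hn => ?_, fun hn => ?_⟩
  · obtain ⟨m, rfl⟩ := hn.two_dvd
    rw [Nat.mul_div_cancel_left m two_pos,
      sum_divisors_two_mul_moebius m fun k => (q : ℚ) ^ k - 1]
    push_cast
    ring
  · rw [Nat.filter_odd_divisors_of_odd hn]
    ring

/-- For odd prime power `q`: for even `n`, `IM_n(q) = 2·SRIM⁻_n(q) − SRIM⁻_{n/2}(q)`,
and for odd `n`, `IM_n(q) = 2·SRIM⁻_n(q)`, where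
`IM_n(q) = (1/n) ∑_{d ∣ n} μ(d)(q^{n/d} − 1)` and
`SRIM⁻_n(q) = (1/(2n)) ∑_{d ∣ n, d odd} μ(d)(q^{n/d} − 1)`. -/
theorem im_srim_moebius_identity (q n : ℕ) (hq : Odd q) (hq' : IsPrimePow q)
    (hn : 1 ≤ n) :
    (Even n →
      (1 / (n : ℚ)) * ∑ d ∈ n.divisors,
          ((ArithmeticFunction.moebius d : ℤ) : ℚ) * ((q : ℚ) ^ (n / d) - 1)
        = 2 * ((1 / (2 * (n : ℚ))) * ∑ d ∈ n.divisors.filter (fun d => Odd d),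
            ((ArithmeticFunction.moebius d : ℤ) : ℚ) * ((q : ℚ) ^ (n / d) - 1))
          - (1 / (2 * ((n / 2 : ℕ) : ℚ))) *
              ∑ d ∈ (n / 2).divisors.filter (fun d => Odd d),
                ((ArithmeticFunction.moebius d : ℤ) : ℚ) * ((q : ℚ) ^ ((n / 2) / d) - 1)) ∧
    (Odd n →
      (1 / (n : ℚ)) * ∑ d ∈ n.divisors,
          ((ArithmeticFunction.moebius d : ℤ) : ℚ) * ((q : ℚ) ^ (n / d) - 1)
        = 2 * ((1 / (2 * (n : ℚ))) * ∑ d ∈ n.divisors.filter (fun d => Odd d),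
            ((ArithmeticFunction.moebius d : ℤ) : ℚ) * ((q : ℚ) ^ (n / d) - 1))) :=
  im_srim_moebius_identity_general q n
end

section
/- For odd prime power q, SRIM⁻_n(q) + SRIM⁺_n(q) equals IM_1(q) − 1 when n = 1, and equals IM_n(q) when n > 1. -/
/-!
Write `g^Q = X ^ n * g (X + X⁻¹)` (`qTransform n g`) for `g` of degree `n`. It is self-reciprocal
of degree `2n`, and every self-reciprocal polynomial of degree `2n` is a unique `g^Q`. Let `g` be
monic irreducible of degree `n` and `p` a monic irreducible factor of `g^Q` with root `α`. Then `g`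
is the minimal polynomial of `α + α⁻¹`, so `n ∣ deg p ≤ 2n`: either `p = g^Q`, or `deg p = n` and
`F(α) = F(α + α⁻¹)`. In the latter case the monic reciprocal `p̂ = p* / p(0)` also divides `g^Q`. If
`p̂ ≠ p` then `g^Q = p p̂`; if `p̂ = p`, then `α ↦ α⁻¹` is an automorphism of `F(α)` fixing
`α + α⁻¹`, so `α = ±1` and `g = X ∓ 2`. Conversely every product `p p̂` is self-reciprocal, hence a
`g^Q`, and `g` is irreducible by the same degree count. Thus `g ↦ g^Q` and `g ↦ {p, p̂}` are
bijections from the monic irreducibles of degree `n` other than `X ∓ 2` onto `SRIM⁻_n` and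
`SRIM⁺_n`. For `n > 1` these `g` are all of `IM_n`; for `n = 1` and `q` odd, `X - 2 ≠ X + 2` and
there are `q - 2 = IM_1 - 1` of them.
-/

open Polynomial

namespace Polynomial

section Semiring

variable {R : Type*} [Semiring R] {p : R[X]}

theorem reflect_divX {N : ℕ} {f : R[X]} (hf : reflect (N + 2) f = f) :
    reflect N f.divX = f.divX := by
  ext i
  rw [coeff_reflect, coeff_divX, coeff_divX]
  rcases le_or_gt i N with hi | hi
  · rw [revAt_le hi]
    conv_rhs => rw [← hf, coeff_reflect, revAt_le (by omega)]
    congr 1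
    omega
  · rw [revAt_eq_self_of_lt hi]

theorem natDegree_divX_le_of_reflect_eq {N : ℕ} {f : R[X]} (hdeg : f.natDegree ≤ N + 2)
    (hf : reflect (N + 2) f = f) (h0 : f.coeff 0 = 0) : f.divX.natDegree ≤ N := by
  have htop : f.coeff (N + 2) = 0 := by
    rw [← hf, coeff_reflect, revAt_le le_rfl, Nat.sub_self, h0]
  rw [natDegree_divX_eq_natDegree_tsub_one]
  have : f.natDegree ≠ N + 2 := fun h => by
    rw [← h, ← leadingCoeff, leadingCoeff_eq_zero] at htop
    simp [htop] at h
  omega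

theorem reverse_eq_mirror (h0 : p.coeff 0 ≠ 0) : p.reverse = p.mirror := by
  rw [mirror, natTrailingDegree_eq_zero.mpr (Or.inr h0), pow_zero, mul_one]

theorem reverse_reverse (h0 : p.coeff 0 ≠ 0) : p.reverse.reverse = p := by
  have h0' : p.reverse.coeff 0 ≠ 0 := by
    rw [coeff_zero_reverse, leadingCoeff_ne_zero]
    rintro rfl
    simp at h0
  rw [reverse_eq_mirror h0', reverse_eq_mirror h0, mirror_mirror]

theorem finite_setOf_natDegree_le [Finite R] (n : ℕ) :
    {g : R[X] | g.natDegree ≤ n}.Finite := by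
  refine Set.Finite.of_finite_image (f := fun g (i : Fin (n + 1)) => g.coeff i) (Set.toFinite _)
    fun g hg h hh heq => ?_
  ext i
  rcases le_or_gt i n with hi | hi
  · exact congrFun heq ⟨i, by omega⟩
  · rw [coeff_eq_zero_of_natDegree_lt (lt_of_le_of_lt hg hi),
      coeff_eq_zero_of_natDegree_lt (lt_of_le_of_lt hh hi)]

end Semiring

section Domain

variable {R : Type*} [CommRing R] [IsDomain R] {p : R[X]}

theorem isUnit_of_isUnit_mirror (h : IsUnit p.mirror) : IsUnit p := by
  obtain ⟨u, hu, hcu⟩ := Polynomial.isUnit_iff.mp h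
  rw [← p.mirror_mirror, ← hcu, mirror_C]
  exact isUnit_C.mpr hu

theorem Irreducible.mirror (hp : Irreducible p) : Irreducible p.mirror where
  not_isUnit h := hp.not_isUnit (isUnit_of_isUnit_mirror h)
  isUnit_or_isUnit a b hab := by
    have : p = a.mirror * b.mirror := by rw [← mirror_mul_of_domain, ← hab, mirror_mirror]
    exact (hp.isUnit_or_isUnit this).imp isUnit_of_isUnit_mirror isUnit_of_isUnit_mirror

end Domain

section qTransform

variable {R : Type*} [CommRing R]

noncomputable def qTransform (n : ℕ) : R[X] →ₗ[R] R[X] :=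
  ∑ i ∈ Finset.range (n + 1), (lcoeff R i).smulRight ((X ^ 2 + 1) ^ i * X ^ (n - i))

theorem qTransform_apply (n : ℕ) (g : R[X]) :
    qTransform n g =
      ∑ i ∈ Finset.range (n + 1), C (g.coeff i) * ((X ^ 2 + 1) ^ i * X ^ (n - i)) := by
  simp [qTransform, smul_eq_C_mul]

theorem coeff_zero_qTransform (n : ℕ) (g : R[X]) : (qTransform n g).coeff 0 = g.coeff n := by
  rw [coeff_zero_eq_eval_zero, qTransform_apply, eval_finsetSum, Finset.sum_eq_single n]
  · simp
  · intro i hi hne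
    have : n - i ≠ 0 := by have := Finset.mem_range.mp hi; omega
    simp [this]
  · simp

theorem qTransform_C_mul_X_pow (n : ℕ) (c : R) :
    qTransform n (C c * X ^ n) = C c * (X ^ 2 + 1) ^ n := by
  rw [qTransform_apply, Finset.sum_eq_single n]
  · simp
  · intro i _ hne
    simp [coeff_X_pow, hne]
  · simp

theorem qTransform_succ {n : ℕ} {g : R[X]} (hd : g.natDegree ≤ n) :
    qTransform (n + 1) g = X * qTransform n g := by
  rw [qTransform_apply, qTransform_apply, Finset.sum_range_succ,
    coeff_eq_zero_of_natDegree_lt (Nat.lt_succ_of_le hd), map_zero, zero_mul, add_zero,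
    Finset.mul_sum]
  refine Finset.sum_congr rfl fun i hi => ?_
  rw [Finset.mem_range] at hi
  rw [show n + 1 - i = n - i + 1 by omega, pow_succ]
  ring

theorem monic_X_sq_add_one : ((X : R[X]) ^ 2 + 1).Monic := by
  simpa using monic_X_pow_add_C (1 : R) two_ne_zero

theorem monic_X_sq_add_one_pow (i : ℕ) : (((X : R[X]) ^ 2 + 1) ^ i).Monic :=
  monic_X_sq_add_one.pow i

theorem qTransform_one_X_sub_C (b : R) : qTransform 1 (X - C b) = X ^ 2 - C b * X + 1 := by
  rw [qTransform_apply, Finset.sum_range_succ, Finset.sum_range_one]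
  simp only [coeff_sub, coeff_X_zero, coeff_C_zero, coeff_X_one, coeff_C_succ]
  simp only [zero_sub, map_neg, pow_zero, Nat.sub_zero, pow_one, one_mul, sub_zero, map_one,
    Nat.sub_self, mul_one]
  ring

theorem aeval_qTransform {K : Type*} [Field K] [Algebra R K] {n : ℕ} {g : R[X]}
    (hd : g.natDegree ≤ n) {u : K} (hu : u ≠ 0) :
    aeval u (qTransform n g) = u ^ n * aeval (u + u⁻¹) g := by
  rw [qTransform_apply, map_sum, aeval_eq_sum_range' (Nat.lt_succ_of_le hd), Finset.mul_sum]
  refine Finset.sum_congr rfl fun i hi => ?_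
  rw [Finset.mem_range] at hi
  have hsq : u ^ 2 + 1 = u * (u + u⁻¹) := by field_simp
  simp only [map_mul, aeval_C, map_pow, map_add, aeval_X, map_one, Algebra.smul_def]
  rw [hsq, mul_pow, show u ^ n = u ^ i * u ^ (n - i) by rw [← pow_add]; congr 1; omega]
  ring

variable [Nontrivial R]

theorem natDegree_X_sq_add_one : ((X : R[X]) ^ 2 + 1).natDegree = 2 := by
  simpa using natDegree_X_pow_add_C (R := R) (n := 2) (r := 1)

theorem natDegree_X_sq_add_one_pow (i : ℕ) : (((X : R[X]) ^ 2 + 1) ^ i).natDegree = 2 * i := by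
  rw [monic_X_sq_add_one.natDegree_pow, natDegree_X_sq_add_one, mul_comm]

theorem natDegree_qTransform_term {n i : ℕ} (hi : i ≤ n) :
    (((X : R[X]) ^ 2 + 1) ^ i * X ^ (n - i)).natDegree = n + i := by
  rw [(monic_X_sq_add_one_pow i).natDegree_mul (monic_X_pow _), natDegree_X_sq_add_one_pow,
    natDegree_X_pow]
  omega

theorem natDegree_qTransform_le (n : ℕ) (g : R[X]) :
    (qTransform n g).natDegree ≤ n + g.natDegree := by
  rw [qTransform_apply]
  refine natDegree_sum_le_of_forall_le _ _ fun i hi => ?_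
  rcases le_or_gt i g.natDegree with hig | hig
  · refine (natDegree_C_mul_le _ _).trans ?_
    rw [natDegree_qTransform_term (by have := Finset.mem_range.mp hi; omega)]
    omega
  · simp [coeff_eq_zero_of_natDegree_lt hig]

theorem coeff_qTransform_add_natDegree {n : ℕ} {g : R[X]} (hd : g.natDegree ≤ n) :
    (qTransform n g).coeff (n + g.natDegree) = g.leadingCoeff := by
  rw [qTransform_apply, finsetSum_coeff, Finset.sum_eq_single g.natDegree]
  · rw [coeff_C_mul, ← natDegree_qTransform_term (R := R) hd,
      ((monic_X_sq_add_one_pow _).mul (monic_X_pow _)).coeff_natDegree, mul_one, leadingCoeff]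
  · intro i hi hne
    rcases lt_or_gt_of_ne hne with hlt | hgt
    · rw [coeff_C_mul, coeff_eq_zero_of_natDegree_lt (p := (X ^ 2 + 1) ^ i * X ^ (n - i)),
        mul_zero]
      rw [natDegree_qTransform_term (by have := Finset.mem_range.mp hi; omega)]
      omega
    · simp [coeff_eq_zero_of_natDegree_lt hgt]
  · exact fun h => absurd (Finset.mem_range.mpr (Nat.lt_succ_of_le hd)) h

theorem leadingCoeff_qTransform {n : ℕ} {g : R[X]} (hd : g.natDegree ≤ n) :
    (qTransform n g).leadingCoeff = g.leadingCoeff := by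
  rcases eq_or_ne g 0 with rfl | hg
  · simp
  have hc : (qTransform n g).coeff (n + g.natDegree) ≠ 0 := by
    rwa [coeff_qTransform_add_natDegree hd, leadingCoeff_ne_zero]
  rw [leadingCoeff, le_antisymm (natDegree_qTransform_le n g) (le_natDegree_of_ne_zero hc),
    coeff_qTransform_add_natDegree hd]

theorem natDegree_qTransform {n : ℕ} {g : R[X]} (hg : g ≠ 0) (hd : g.natDegree ≤ n) :
    (qTransform n g).natDegree = n + g.natDegree := by
  refine le_antisymm (natDegree_qTransform_le n g) (le_natDegree_of_ne_zero ?_)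
  rwa [coeff_qTransform_add_natDegree hd, leadingCoeff_ne_zero]

theorem monic_qTransform {n : ℕ} {g : R[X]} (hg : g.Monic) (hd : g.natDegree ≤ n) :
    (qTransform n g).Monic := by
  rw [Monic, leadingCoeff_qTransform hd, hg.leadingCoeff]

theorem qTransform_injOn (n : ℕ) : Set.InjOn (qTransform (R := R) n) {g | g.natDegree ≤ n} := by
  intro g hg h hh heq
  have hd : (g - h).natDegree ≤ n := (natDegree_sub_le _ _).trans (max_le hg hh)
  have : (g - h).leadingCoeff = 0 := by
    rw [← leadingCoeff_qTransform hd, map_sub, heq, sub_self, leadingCoeff_zero]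
  exact sub_eq_zero.mp (leadingCoeff_eq_zero.mp this)

theorem reflect_X_sq_add_one_pow (i : ℕ) :
    reflect (2 * i) (((X : R[X]) ^ 2 + 1) ^ i) = ((X : R[X]) ^ 2 + 1) ^ i := by
  induction i with
  | zero => simp
  | succ k ih =>
    rw [pow_succ', show 2 * (k + 1) = 2 + 2 * k by ring,
      reflect_mul _ _ natDegree_X_sq_add_one.le (natDegree_X_sq_add_one_pow k).le, ih]
    simp [reflect_add, reflect_one, reflect_monomial, add_comm]

theorem reflect_qTransform (n : ℕ) (g : R[X]) :
    reflect (2 * n) (qTransform n g) = qTransform n g := by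
  ext k
  rw [qTransform_apply, coeff_reflect, finsetSum_coeff, finsetSum_coeff]
  refine Finset.sum_congr rfl fun i hi => ?_
  rw [Finset.mem_range] at hi
  rw [← coeff_reflect, reflect_C_mul, show 2 * n = 2 * i + 2 * (n - i) by omega,
    reflect_mul _ _ (natDegree_X_sq_add_one_pow i).le
      ((natDegree_X_pow_le _).trans (by omega)),
    reflect_X_sq_add_one_pow, reflect_monomial, revAt_le (by omega),
    show 2 * (n - i) - (n - i) = n - i by omega]

theorem reverse_qTransform_natDegree (g : R[X]) :
    (qTransform g.natDegree g).reverse = qTransform g.natDegree g := by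
  rcases eq_or_ne g 0 with rfl | hg
  · simp
  rw [reverse, natDegree_qTransform hg le_rfl, ← two_mul, reflect_qTransform]

theorem exists_qTransform_eq {n : ℕ} {f : R[X]} (hdeg : f.natDegree ≤ 2 * n)
    (hf : reflect (2 * n) f = f) : ∃ g : R[X], g.natDegree ≤ n ∧ qTransform n g = f := by
  induction n generalizing f with
  | zero =>
    refine ⟨f, by simpa using hdeg, ?_⟩
    rw [qTransform_apply]
    simpa using (eq_C_of_natDegree_le_zero (by simpa using hdeg)).symm
  | succ n ih =>
    -- removing `c (X ^ 2 + 1) ^ (n + 1)` leaves `X` times a self-reciprocal polynomial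
    set c := f.coeff 0
    set f' := f - C c * (X ^ 2 + 1) ^ (n + 1)
    have hf' : reflect (2 * n + 2) f' = f' := by
      rw [reflect_sub, ← mul_add_one, hf, reflect_C_mul, reflect_X_sq_add_one_pow]
    have hdeg' : f'.natDegree ≤ 2 * n + 2 :=
      (natDegree_sub_le _ _).trans (max_le hdeg ((natDegree_C_mul_le _ _).trans
        (natDegree_X_sq_add_one_pow _).le))
    have h0 : f'.coeff 0 = 0 := by
      simp [f', c, coeff_zero_eq_eval_zero]
    obtain ⟨g, hg, hgf⟩ := ih (natDegree_divX_le_of_reflect_eq hdeg' hf' h0) (reflect_divX hf')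
    refine ⟨g + C c * X ^ (n + 1), ?_, ?_⟩
    · exact (natDegree_add_le _ _).trans (max_le (by omega)
        ((natDegree_C_mul_le _ _).trans (natDegree_X_pow_le _)))
    · rw [map_add, qTransform_succ hg, hgf, qTransform_C_mul_X_pow]
      have := X_mul_divX_add f'
      rw [h0, map_zero, add_zero] at this
      rw [this]
      ring

end qTransform

section monicReverse

variable {F : Type*} [Field F] {p f : F[X]}

noncomputable def monicReverse (p : F[X]) : F[X] := C (p.coeff 0)⁻¹ * p.reverse

theorem natDegree_monicReverse (h0 : p.coeff 0 ≠ 0) : (monicReverse p).natDegree = p.natDegree := by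
  rw [monicReverse, natDegree_C_mul (inv_ne_zero h0), reverse_eq_mirror h0, mirror_natDegree]

theorem monic_monicReverse (h0 : p.coeff 0 ≠ 0) : (monicReverse p).Monic := by
  rw [Monic, monicReverse, leadingCoeff_mul, leadingCoeff_C, reverse_leadingCoeff, trailingCoeff,
    natTrailingDegree_eq_zero.mpr (Or.inr h0), inv_mul_cancel₀ h0]

theorem Irreducible.monicReverse (hp : Irreducible p) (h0 : p.coeff 0 ≠ 0) :
    Irreducible (monicReverse p) := by
  rw [Polynomial.monicReverse, irreducible_isUnit_mul (isUnit_C.mpr (inv_ne_zero h0).isUnit),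
    reverse_eq_mirror h0]
  exact hp.mirror

theorem monicReverse_monicReverse (hm : p.Monic) (h0 : p.coeff 0 ≠ 0) :
    monicReverse (monicReverse p) = p := by
  have hc : (monicReverse p).coeff 0 = (p.coeff 0)⁻¹ := by
    rw [monicReverse, coeff_C_mul, coeff_zero_reverse, hm.leadingCoeff, mul_one]
  rw [monicReverse, hc, inv_inv, monicReverse, reverse_mul_of_domain, reverse_C,
    reverse_reverse h0, ← mul_assoc, ← C_mul, mul_inv_cancel₀ h0, C_1, one_mul]

theorem monicReverse_eq_self (hrev : p.reverse = p) (h1 : p.coeff 0 = 1) : monicReverse p = p := by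
  rw [monicReverse, h1, inv_one, C_1, one_mul, hrev]

theorem reverse_mul_monicReverse (h0 : p.coeff 0 ≠ 0) :
    (p * monicReverse p).reverse = p * monicReverse p := by
  rw [reverse_mul_of_domain, monicReverse, reverse_mul_of_domain, reverse_C, reverse_reverse h0]
  ring

theorem monicReverse_dvd (h0 : p.coeff 0 ≠ 0) (hdvd : p ∣ f) (hf : f.reverse = f) :
    monicReverse p ∣ f := by
  obtain ⟨r, rfl⟩ := hdvd
  refine ((isUnit_C.mpr (inv_ne_zero h0).isUnit).mul_left_dvd).mpr ?_
  rw [← hf, reverse_mul_of_domain]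
  exact dvd_mul_right _ _

theorem mul_monicReverse_dvd (hp : Irreducible p) (hm : p.Monic) (h0 : p.coeff 0 ≠ 0)
    (hne : monicReverse p ≠ p) (hdvd : p ∣ f) (hf : f.reverse = f) : p * monicReverse p ∣ f := by
  have hcop : IsCoprime p (monicReverse p) := hp.coprime_iff_not_dvd.mpr fun h =>
    hne (eq_of_monic_of_dvd_of_natDegree_le hm (monic_monicReverse h0) h
      (natDegree_monicReverse h0).le)
  exact hcop.mul_dvd hdvd (monicReverse_dvd h0 hdvd hf)

theorem aeval_inv_monicReverse {K : Type*} [Field K] [Algebra F K] {x : K} (hx : x ≠ 0)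
    (h : aeval x p = 0) : aeval x⁻¹ (monicReverse p) = 0 := by
  let := invertibleOfNonzero hx
  have : eval₂ (algebraMap F K) (⅟x) p.reverse = 0 := by
    rw [eval₂_reverse_eq_zero_iff, ← aeval_def, h]
  rw [monicReverse, map_mul, aeval_def (R := F) (x := x⁻¹) p.reverse, ← invOf_eq_inv, this,
    mul_zero]

end monicReverse

section Roots

variable {F K : Type*} [Field F] [Field K] [Algebra F K] {g : F[X]} {α : K}

theorem ne_zero_of_aeval_qTransform_eq_zero (hg : g ≠ 0)
    (h : aeval α (qTransform g.natDegree g) = 0) : α ≠ 0 := by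
  rintro rfl
  rw [← coeff_zero_eq_aeval_zero', coeff_zero_qTransform, ← leadingCoeff,
    FaithfulSMul.algebraMap_eq_zero_iff, leadingCoeff_eq_zero] at h
  exact hg h

theorem aeval_add_inv_eq_zero (hg : g ≠ 0) (h : aeval α (qTransform g.natDegree g) = 0) :
    aeval (α + α⁻¹) g = 0 := by
  have hα := ne_zero_of_aeval_qTransform_eq_zero hg h
  rw [aeval_qTransform le_rfl hα] at h
  exact (mul_eq_zero.mp h).resolve_left (pow_ne_zero _ hα)

theorem minpoly_add_inv (hg : Irreducible g) (hgm : g.Monic)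
    (h : aeval α (qTransform g.natDegree g) = 0) : minpoly F (α + α⁻¹) = g :=
  (minpoly.eq_of_irreducible_of_monic hg (aeval_add_inv_eq_zero hg.ne_zero h) hgm).symm

theorem minpoly_dvd_qTransform_minpoly_add_inv (hα : α ≠ 0) :
    minpoly F α ∣ qTransform (minpoly F (α + α⁻¹)).natDegree (minpoly F (α + α⁻¹)) :=
  minpoly.dvd F α (by rw [aeval_qTransform le_rfl hα, minpoly.aeval, mul_zero])

end Roots

section Factors

variable {F : Type*} [Field F] {p g : F[X]}

theorem natDegree_qTransform_of_monic (hg : g.Monic) :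
    (qTransform g.natDegree g).natDegree = 2 * g.natDegree := by
  rw [natDegree_qTransform hg.ne_zero le_rfl, two_mul]

theorem monicReverse_qTransform (hg : g.Monic) :
    monicReverse (qTransform g.natDegree g) = qTransform g.natDegree g :=
  monicReverse_eq_self (reverse_qTransform_natDegree g)
    (by rw [coeff_zero_qTransform, hg.coeff_natDegree])

theorem coeff_zero_ne_zero_of_dvd_qTransform (hgm : g.Monic) (hdvd : p ∣ qTransform g.natDegree g) :
    p.coeff 0 ≠ 0 := by
  obtain ⟨r, hr⟩ := hdvd
  refine left_ne_zero_of_mul_eq_one (b := r.coeff 0) ?_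
  rw [← mul_coeff_zero, ← hr, coeff_zero_qTransform, hgm.coeff_natDegree]

theorem natDegree_eq_or_eq_qTransform_of_dvd (hp : Irreducible p) (hpm : p.Monic) (hgm : g.Monic)
    (hdeg : g.natDegree ∣ p.natDegree) (hdvd : p ∣ qTransform g.natDegree g) :
    p.natDegree = g.natDegree ∨ p = qTransform g.natDegree g := by
  have hQ := monic_qTransform hgm le_rfl
  have hle : p.natDegree ≤ 2 * g.natDegree :=
    natDegree_qTransform_of_monic hgm ▸ natDegree_le_of_dvd hdvd hQ.ne_zero
  obtain ⟨c, hc⟩ := hdeg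
  have hpos := hp.natDegree_pos
  have hg0 : 0 < g.natDegree := Nat.pos_of_ne_zero fun h => by rw [h, zero_mul] at hc; omega
  have hc2 : c ≤ 2 := Nat.le_of_mul_le_mul_left (by rw [← hc, mul_comm]; exact hle) hg0
  interval_cases c
  · omega
  · exact Or.inl (by simpa using hc)
  · refine Or.inr (eq_of_monic_of_dvd_of_natDegree_le hpm hQ hdvd ?_).symm
    rw [natDegree_qTransform_of_monic hgm, hc, mul_comm]

theorem exists_irreducible_dvd_of_dvd_qTransform (hp : Irreducible p) (hpm : p.Monic) (hg : g ≠ 0)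
    (hdvd : p ∣ qTransform g.natDegree g) :
    ∃ m : F[X], Irreducible m ∧ m.Monic ∧ m ∣ g ∧ m.natDegree ∣ p.natDegree ∧
      p ∣ qTransform m.natDegree m := by
  have := Fact.mk hp
  have : Module.Finite F (AdjoinRoot p) := hpm.finite_adjoinRoot
  set α := AdjoinRoot.root p
  have hα : aeval α (qTransform g.natDegree g) = 0 := by
    rwa [AdjoinRoot.aeval_eq, AdjoinRoot.mk_eq_zero]
  have hint : IsIntegral F (α + α⁻¹) := .of_finite F _
  refine ⟨_, minpoly.irreducible hint, minpoly.monic hint,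
    minpoly.dvd F _ (aeval_add_inv_eq_zero hg hα), ?_, ?_⟩
  · rw [← AdjoinRoot.powerBasis_dim hp.ne_zero, ← (AdjoinRoot.powerBasis hp.ne_zero).finrank]
    exact minpoly.degree_dvd hint
  · simpa [α, AdjoinRoot.minpoly_root hp.ne_zero, hpm.leadingCoeff] using
      minpoly_dvd_qTransform_minpoly_add_inv (F := F) (ne_zero_of_aeval_qTransform_eq_zero hg hα)

theorem natDegree_eq_or_eq_qTransform (hp : Irreducible p) (hpm : p.Monic) (hg : Irreducible g)
    (hgm : g.Monic) (hdvd : p ∣ qTransform g.natDegree g) :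
    p.natDegree = g.natDegree ∨ p = qTransform g.natDegree g := by
  obtain ⟨m, hm, hmm, hmg, hdeg, -⟩ :=
    exists_irreducible_dvd_of_dvd_qTransform hp hpm hg.ne_zero hdvd
  obtain rfl : m = g := eq_of_monic_of_associated hmm hgm (hm.associated_of_dvd hg hmg)
  exact natDegree_eq_or_eq_qTransform_of_dvd hp hpm hmm hdeg hdvd

theorem _root_.AdjoinRoot.inv_root_eq_root_of_adjoin_eq_top [Fact (Irreducible p)]
    (hinv : aeval (AdjoinRoot.root p)⁻¹ p = 0)
    (htop : Algebra.adjoin F {AdjoinRoot.root p + (AdjoinRoot.root p)⁻¹} = ⊤) :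
    (AdjoinRoot.root p)⁻¹ = AdjoinRoot.root p := by
  have hinv' : eval₂ (Algebra.ofId F (AdjoinRoot p) : F →+* AdjoinRoot p)
      (AdjoinRoot.root p)⁻¹ p = 0 := hinv
  have hσ : AdjoinRoot.liftAlgHom p (Algebra.ofId F _) _ hinv' = AlgHom.id F _ := by
    refine AlgHom.ext_of_adjoin_eq_top htop fun x hx => ?_
    rw [Set.mem_singleton_iff.mp hx]
    simp [add_comm]
  simpa using DFunLike.congr_fun hσ (AdjoinRoot.root p)

theorem eq_X_sub_C_two_of_monicReverse_eq_self (hp : Irreducible p) (hpm : p.Monic)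
    (hg : Irreducible g) (hgm : g.Monic) (hdeg : p.natDegree = g.natDegree)
    (hrev : monicReverse p = p) (hdvd : p ∣ qTransform g.natDegree g) :
    g = X - C 2 ∨ g = X - C (-2) := by
  have := Fact.mk hp
  have : Module.Finite F (AdjoinRoot p) := hpm.finite_adjoinRoot
  set α := AdjoinRoot.root p
  have hα : aeval α (qTransform g.natDegree g) = 0 := by
    rwa [AdjoinRoot.aeval_eq, AdjoinRoot.mk_eq_zero]
  have hα0 := ne_zero_of_aeval_qTransform_eq_zero hg.ne_zero hα
  have hβ : minpoly F (α + α⁻¹) = g := minpoly_add_inv hg hgm hα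
  have hinv : aeval α⁻¹ p = 0 := by
    have := aeval_inv_monicReverse hα0 (AdjoinRoot.aeval_algHom_eq_zero p (AlgHom.id F _))
    rwa [hrev] at this
  have htop : Algebra.adjoin F {α + α⁻¹} = ⊤ := by
    refine Algebra.adjoin_eq_top_of_primitive_element (IsIntegral.of_finite F _).isAlgebraic
      ((Field.primitive_element_iff_minpoly_natDegree_eq F _).mpr ?_)
    rw [hβ, ← hdeg, (AdjoinRoot.powerBasis hp.ne_zero).finrank, AdjoinRoot.powerBasis_dim]
  have hαα : α⁻¹ = α := AdjoinRoot.inv_root_eq_root_of_adjoin_eq_top hinv htop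
  have hsq : α * α = 1 := by
    nth_rw 1 [← hαα]
    exact inv_mul_cancel₀ hα0
  rcases mul_self_eq_one_iff.mp hsq with h | h
  · left
    rw [← hβ, h, show (1 : AdjoinRoot p) + 1⁻¹ = algebraMap F _ 2 by rw [map_ofNat]; norm_num,
      minpoly.eq_X_sub_C]
  · right
    rw [← hβ, h, show (-1 : AdjoinRoot p) + (-1)⁻¹ = algebraMap F _ (-2) by
      rw [map_neg, map_ofNat]; norm_num, minpoly.eq_X_sub_C]

theorem qTransform_eq_mul_monicReverse (hp : Irreducible p) (hpm : p.Monic) (hgm : g.Monic)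
    (hdeg : p.natDegree = g.natDegree) (hne : monicReverse p ≠ p)
    (hdvd : p ∣ qTransform g.natDegree g) : qTransform g.natDegree g = p * monicReverse p := by
  have h0 := coeff_zero_ne_zero_of_dvd_qTransform hgm hdvd
  refine eq_of_monic_of_dvd_of_natDegree_le (hpm.mul (monic_monicReverse h0))
    (monic_qTransform hgm le_rfl)
    (mul_monicReverse_dvd hp hpm h0 hne hdvd (reverse_qTransform_natDegree g)) ?_
  rw [natDegree_qTransform_of_monic hgm, natDegree_mul hpm.ne_zero (monic_monicReverse h0).ne_zero,
    natDegree_monicReverse h0, hdeg, two_mul]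

theorem irreducible_of_irreducible_qTransform (hgm : g.Monic)
    (h : Irreducible (qTransform g.natDegree g)) : Irreducible g := by
  obtain ⟨m, hm, hmm, hmg, hdeg, hdvd⟩ :=
    exists_irreducible_dvd_of_dvd_qTransform h (monic_qTransform hgm le_rfl) hgm.ne_zero dvd_rfl
  have hmn : m.natDegree ≤ g.natDegree := natDegree_le_of_dvd hmg hgm.ne_zero
  have hmpos := hm.natDegree_pos
  rcases natDegree_eq_or_eq_qTransform_of_dvd h (monic_qTransform hgm le_rfl) hmm hdeg hdvd
    with h' | h'
  · rw [natDegree_qTransform_of_monic hgm] at h'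
    omega
  · have := congrArg natDegree h'
    rw [natDegree_qTransform_of_monic hgm, natDegree_qTransform_of_monic hmm] at this
    rwa [eq_of_monic_of_dvd_of_natDegree_le hmm hgm hmg (by omega)]

theorem irreducible_of_qTransform_eq_mul_monicReverse (hgm : g.Monic) (hp : Irreducible p)
    (hpm : p.Monic) (h0 : p.coeff 0 ≠ 0) (hne : monicReverse p ≠ p)
    (h : qTransform g.natDegree g = p * monicReverse p) : Irreducible g := by
  obtain ⟨m, hm, hmm, hmg, hdeg, hdvd⟩ :=
    exists_irreducible_dvd_of_dvd_qTransform hp hpm hgm.ne_zero (h ▸ dvd_mul_right _ _)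
  have hpg : p.natDegree = g.natDegree := by
    have := congrArg natDegree h
    rw [natDegree_qTransform_of_monic hgm,
      natDegree_mul hpm.ne_zero (monic_monicReverse h0).ne_zero, natDegree_monicReverse h0] at this
    omega
  rcases natDegree_eq_or_eq_qTransform_of_dvd hp hpm hmm hdeg hdvd with h' | h'
  · rwa [eq_of_monic_of_dvd_of_natDegree_le hmm hgm hmg (by omega)]
  · exact absurd (h' ▸ monicReverse_qTransform hmm) hne

end Factors

section Counting

variable {F : Type*} [Field F] {n : ℕ} {p g : F[X]}

variable (F) in
def selfReciprocalIrreducibles (n : ℕ) : Set F[X] :=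
  {p | Irreducible p ∧ p.Monic ∧ p.natDegree = 2 * n ∧ p.reverse = p}

variable (F) in
def reciprocalPairs (n : ℕ) : Set (Set F[X]) :=
  {s | ∃ p : F[X], Irreducible p ∧ p.Monic ∧ p.natDegree = n ∧ p.coeff 0 ≠ 0 ∧
    monicReverse p ≠ p ∧ s = {p, monicReverse p}}

variable (F) in
def nonexceptionalIrreducibles (n : ℕ) : Set F[X] :=
  {g | Irreducible g ∧ g.Monic ∧ g.natDegree = n ∧ g ≠ X - C 2 ∧ g ≠ X - C (-2)}

def monicIrreducibleFactors (f : F[X]) : Set F[X] := {q | q.Monic ∧ Irreducible q ∧ q ∣ f}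

theorem exists_qTransform_eq_sq_of_exceptional (hg : g = X - C 2 ∨ g = X - C (-2)) :
    ∃ a : F, qTransform g.natDegree g = (X - C a) ^ 2 := by
  rcases hg with rfl | rfl
  · refine ⟨1, ?_⟩
    rw [natDegree_X_sub_C, qTransform_one_X_sub_C, map_ofNat, C_1]
    ring
  · refine ⟨-1, ?_⟩
    rw [natDegree_X_sub_C, qTransform_one_X_sub_C, map_neg, map_ofNat, map_neg, C_1]
    ring

theorem not_irreducible_sq_X_sub_C (a : F) : ¬ Irreducible ((X - C a) ^ 2) := fun h =>
  (irreducible_X_sub_C a).not_isUnit ((h.isUnit_or_isUnit (sq _)).elim id id)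

theorem monicReverse_eq_self_of_mul_eq_sq (hp : Irreducible p) (hpm : p.Monic)
    (h0 : p.coeff 0 ≠ 0) {a : F} (h : p * monicReverse p = (X - C a) ^ 2) : monicReverse p = p := by
  have key : ∀ q : F[X], Irreducible q → q.Monic → q ∣ (X - C a) ^ 2 → q = X - C a :=
    fun q hq hqm hdvd => (eq_of_monic_of_dvd_of_natDegree_le hqm (monic_X_sub_C a)
      (hq.prime.dvd_of_dvd_pow hdvd) (by rw [natDegree_X_sub_C]; exact hq.natDegree_pos)).symm
  rw [key _ (hp.monicReverse h0) (monic_monicReverse h0) (h ▸ dvd_mul_left _ _),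
    key p hp hpm (h ▸ dvd_mul_right _ _)]

theorem monicIrreducibleFactors_mul_monicReverse (hp : Irreducible p) (hpm : p.Monic)
    (h0 : p.coeff 0 ≠ 0) : monicIrreducibleFactors (p * monicReverse p) = {p, monicReverse p} := by
  have hrm := monic_monicReverse h0
  have hri := hp.monicReverse h0
  ext q
  simp only [monicIrreducibleFactors, Set.mem_ofPred_eq, Set.mem_insert_iff,
    Set.mem_singleton_iff]
  constructor
  · rintro ⟨hqm, hqi, hqd⟩
    refine (hqi.prime.dvd_or_dvd hqd).imp (fun h => ?_) (fun h => ?_)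
    · exact eq_of_monic_of_associated hqm hpm (hqi.associated_of_dvd hp h)
    · exact eq_of_monic_of_associated hqm hrm (hqi.associated_of_dvd hri h)
  · rintro (rfl | rfl)
    · exact ⟨hpm, hp, dvd_mul_right _ _⟩
    · exact ⟨hrm, hri, dvd_mul_left _ _⟩

theorem exists_monic_qTransform_eq {P : F[X]} (hm : P.Monic) (hd : P.natDegree = 2 * n)
    (hrev : P.reverse = P) : ∃ g : F[X], g.Monic ∧ g.natDegree = n ∧ qTransform n g = P := by
  obtain ⟨g, hgd, rfl⟩ := exists_qTransform_eq hd.le (by rwa [reverse, hd] at hrev)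
  have hg0 : g ≠ 0 := by rintro rfl; simp at hm
  refine ⟨g, by rwa [Monic, ← leadingCoeff_qTransform hgd], ?_, rfl⟩
  rw [natDegree_qTransform hg0 hgd] at hd
  omega

theorem exists_qTransform_eq_mul_monicReverse (hg : g ∈ nonexceptionalIrreducibles F n)
    (hred : ¬ Irreducible (qTransform n g)) :
    ∃ p : F[X], Irreducible p ∧ p.Monic ∧ p.natDegree = n ∧ p.coeff 0 ≠ 0 ∧
      monicReverse p ≠ p ∧ qTransform n g = p * monicReverse p := by
  obtain ⟨hgi, hgm, rfl, hg2, hg2'⟩ := hg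
  have hQ : ¬ IsUnit (qTransform g.natDegree g) := not_isUnit_of_natDegree_pos _ <| by
    rw [natDegree_qTransform_of_monic hgm]
    exact Nat.mul_pos two_pos hgi.natDegree_pos
  obtain ⟨p, hpm, hpi, hdvd⟩ := exists_monic_irreducible_factor _ hQ
  rcases natDegree_eq_or_eq_qTransform hpi hpm hgi hgm hdvd with hdeg | rfl
  · by_cases hrev : monicReverse p = p
    · exact absurd (eq_X_sub_C_two_of_monicReverse_eq_self hpi hpm hgi hgm hdeg hrev hdvd)
        (not_or.mpr ⟨hg2, hg2'⟩)
    · exact ⟨p, hpi, hpm, hdeg, coeff_zero_ne_zero_of_dvd_qTransform hgm hdvd, hrev,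
        qTransform_eq_mul_monicReverse hpi hpm hgm hdeg hrev hdvd⟩
  · exact absurd hpi hred

theorem selfReciprocalIrreducibles_eq_image :
    selfReciprocalIrreducibles F n = qTransform n ''
      (nonexceptionalIrreducibles F n ∩ {g | Irreducible (qTransform n g)}) := by
  ext P
  constructor
  · rintro ⟨hPi, hPm, hPd, hPrev⟩
    obtain ⟨g, hgm, rfl, rfl⟩ := exists_monic_qTransform_eq hPm hPd hPrev
    refine ⟨g, ⟨⟨irreducible_of_irreducible_qTransform hgm hPi, hgm, rfl, ?_⟩, hPi⟩, rfl⟩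
    rw [← not_or]
    intro hexc
    obtain ⟨a, ha⟩ := exists_qTransform_eq_sq_of_exceptional hexc
    exact not_irreducible_sq_X_sub_C a (ha ▸ hPi)
  · rintro ⟨g, ⟨⟨-, hgm, rfl, -⟩, hQi⟩, rfl⟩
    exact ⟨hQi, monic_qTransform hgm le_rfl, natDegree_qTransform_of_monic hgm,
      reverse_qTransform_natDegree g⟩

theorem reciprocalPairs_eq_image :
    reciprocalPairs F n = (fun g => monicIrreducibleFactors (qTransform n g)) ''
      (nonexceptionalIrreducibles F n \ {g | Irreducible (qTransform n g)}) := by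
  ext s
  constructor
  · rintro ⟨p, hpi, hpm, hpd, h0, hne, rfl⟩
    have hrm := monic_monicReverse h0
    obtain ⟨g, hgm, hgd, hQ⟩ := exists_monic_qTransform_eq (hpm.mul hrm)
      (by rw [natDegree_mul hpm.ne_zero hrm.ne_zero, natDegree_monicReverse h0, hpd, two_mul])
      (reverse_mul_monicReverse h0)
    subst hgd
    refine ⟨g, ⟨⟨irreducible_of_qTransform_eq_mul_monicReverse hgm hpi hpm h0 hne hQ, hgm, rfl,
      ?_⟩, ?_⟩, ?_⟩
    · rw [← not_or]
      intro hexc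
      obtain ⟨a, ha⟩ := exists_qTransform_eq_sq_of_exceptional hexc
      exact hne (monicReverse_eq_self_of_mul_eq_sq hpi hpm h0 (hQ ▸ ha))
    · rw [Set.mem_ofPred_eq, hQ]
      exact fun h => (h.isUnit_or_isUnit rfl).elim hpi.not_isUnit (hpi.monicReverse h0).not_isUnit
    · dsimp only
      rw [hQ, monicIrreducibleFactors_mul_monicReverse hpi hpm h0]
  · rintro ⟨g, hg, rfl⟩
    obtain ⟨p, hpi, hpm, hpd, h0, hne, hQ⟩ := exists_qTransform_eq_mul_monicReverse hg.1 hg.2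
    refine ⟨p, hpi, hpm, hpd, h0, hne, ?_⟩
    dsimp only
    rw [hQ, monicIrreducibleFactors_mul_monicReverse hpi hpm h0]

theorem injOn_monicIrreducibleFactors_qTransform :
    Set.InjOn (fun g => monicIrreducibleFactors (qTransform n g))
      (nonexceptionalIrreducibles F n \ {g | Irreducible (qTransform n g)}) := by
  intro g₁ hg₁ g₂ hg₂ (heq : monicIrreducibleFactors _ = monicIrreducibleFactors _)
  obtain ⟨p₁, hp₁i, hp₁m, -, h₁, -, hQ₁⟩ := exists_qTransform_eq_mul_monicReverse hg₁.1 hg₁.2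
  obtain ⟨p₂, hp₂i, hp₂m, -, h₂, -, hQ₂⟩ := exists_qTransform_eq_mul_monicReverse hg₂.1 hg₂.2
  have hmem : p₂ ∈ monicIrreducibleFactors (qTransform n g₁) := by
    rw [heq, hQ₂]
    exact ⟨hp₂m, hp₂i, dvd_mul_right _ _⟩
  rw [hQ₁, monicIrreducibleFactors_mul_monicReverse hp₁i hp₁m h₁] at hmem
  refine qTransform_injOn n hg₁.1.2.2.1.le hg₂.1.2.2.1.le ?_
  rcases hmem with rfl | rfl
  · rw [hQ₁, hQ₂]
  · rw [hQ₁, hQ₂, monicReverse_monicReverse hp₁m h₁, mul_comm]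

theorem ncard_selfReciprocalIrreducibles_add_ncard_reciprocalPairs [Finite F] (n : ℕ) :
    (selfReciprocalIrreducibles F n).ncard + (reciprocalPairs F n).ncard =
      (nonexceptionalIrreducibles F n).ncard := by
  have hfin : (nonexceptionalIrreducibles F n).Finite :=
    (finite_setOf_natDegree_le n).subset fun g hg => hg.2.2.1.le
  rw [selfReciprocalIrreducibles_eq_image, reciprocalPairs_eq_image,
    ((qTransform_injOn n).mono fun g hg => hg.1.2.2.1.le).ncard_image,
    injOn_monicIrreducibleFactors_qTransform.ncard_image,
    Set.ncard_inter_add_ncard_sdiff_eq_ncard _ _ hfin]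

theorem nonexceptionalIrreducibles_eq (hn : 1 < n) :
    nonexceptionalIrreducibles F n =
      {p | Irreducible p ∧ p.Monic ∧ p.natDegree = n ∧ p.coeff 0 ≠ 0} := by
  ext g
  simp only [nonexceptionalIrreducibles, Set.mem_ofPred_eq]
  refine and_congr_right fun hgi => and_congr_right fun _ => and_congr_right fun hgd => ?_
  have hX : ∀ a : F, g ≠ X - C a := fun a h => by
    rw [h, natDegree_X_sub_C] at hgd
    omega
  refine ⟨fun _ h0 => ?_, fun _ => ⟨hX 2, hX (-2)⟩⟩
  have := degree_eq_degree_of_associated (irreducible_X.associated_of_dvd hgi (X_dvd_iff.mpr h0))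
  rw [degree_X, degree_eq_natDegree hgi.ne_zero, hgd] at this
  norm_cast at this
  omega

theorem setOf_irreducible_monic_natDegree_one (P : F[X] → Prop) :
    {g : F[X] | Irreducible g ∧ g.Monic ∧ g.natDegree = 1 ∧ P g} =
      (fun a => X - C a) '' {a | P (X - C a)} := by
  ext g
  constructor
  · rintro ⟨-, hgm, hgd, hP⟩
    have hg : X - C (-g.coeff 0) = g := by
      rw [map_neg, sub_neg_eq_add]
      exact (hgm.eq_X_add_C hgd).symm
    exact ⟨-g.coeff 0, by rwa [Set.mem_ofPred_eq, hg], hg⟩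
  · rintro ⟨a, hP, rfl⟩
    exact ⟨irreducible_X_sub_C a, monic_X_sub_C a, natDegree_X_sub_C a, hP⟩

theorem injective_X_sub_C : Function.Injective fun a : F => X - C a :=
  fun _ _ h => C_injective (sub_right_injective h)

theorem ncard_nonexceptionalIrreducibles_one [Fintype F] (h2 : (2 : F) ≠ -2) :
    (nonexceptionalIrreducibles F 1).ncard = Fintype.card F - 2 := by
  rw [nonexceptionalIrreducibles, setOf_irreducible_monic_natDegree_one,
    Set.ncard_image_of_injective _ injective_X_sub_C]
  have : {a : F | X - C a ≠ X - C 2 ∧ X - C a ≠ X - C (-2)} = {2, -2}ᶜ := by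
    ext a
    simp only [Set.mem_ofPred_eq, Set.mem_compl_iff, Set.mem_insert_iff, Set.mem_singleton_iff,
      ne_eq, sub_right_inj, C_inj, not_or]
  rw [this, Set.ncard_compl, Set.ncard_pair h2, Nat.card_eq_fintype_card]

theorem ncard_setOf_irreducible_natDegree_one [Fintype F] :
    {p : F[X] | Irreducible p ∧ p.Monic ∧ p.natDegree = 1 ∧ p.coeff 0 ≠ 0}.ncard =
      Fintype.card F - 1 := by
  rw [setOf_irreducible_monic_natDegree_one,
    Set.ncard_image_of_injective _ injective_X_sub_C]
  have : {a : F | (X - C a).coeff 0 ≠ 0} = {0}ᶜ := by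
    ext a
    simp
  rw [this, Set.ncard_compl, Set.ncard_singleton, Nat.card_eq_fintype_card]

end Counting

end Polynomial

theorem FiniteField.two_ne_neg_two_of_odd_card {F : Type*} [Field F] [Fintype F]
    (hq : Odd (Fintype.card F)) : (2 : F) ≠ -2 := by
  have hchar : ringChar F ≠ 2 := fun h => by
    have := FiniteField.even_card_iff_char_two.mp h
    rw [Nat.odd_iff] at hq
    omega
  exact fun h => Ring.two_ne_zero hchar ((Ring.eq_self_iff_eq_zero_of_char_ne_two hchar).mp h.symm)

/-- For odd prime power `q`, `SRIM⁻_n(q) + SRIM⁺_n(q)` equals `IM_1(q) − 1` when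
`n = 1` and `IM_n(q)` when `n > 1`. -/
theorem srim_add_srim_pairs {F : Type*} [Field F] [Fintype F]
    (hq : Odd (Fintype.card F)) :
    (({p : F[X] | Irreducible p ∧ p.Monic ∧ p.natDegree = 2 * 1 ∧ p.reverse = p}.ncard : ℤ)
      + ({s : Set F[X] | ∃ p : F[X], Irreducible p ∧ p.Monic ∧ p.natDegree = 1 ∧
            p.coeff 0 ≠ 0 ∧ C (p.coeff 0)⁻¹ * p.reverse ≠ p ∧
            s = {p, C (p.coeff 0)⁻¹ * p.reverse}}.ncard : ℤ)
      = ({p : F[X] | Irreducible p ∧ p.Monic ∧ p.natDegree = 1 ∧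
            p.coeff 0 ≠ 0}.ncard : ℤ) - 1)
    ∧ ∀ n : ℕ, 1 < n →
      (({p : F[X] | Irreducible p ∧ p.Monic ∧ p.natDegree = 2 * n ∧ p.reverse = p}.ncard : ℤ)
        + ({s : Set F[X] | ∃ p : F[X], Irreducible p ∧ p.Monic ∧ p.natDegree = n ∧
              p.coeff 0 ≠ 0 ∧ C (p.coeff 0)⁻¹ * p.reverse ≠ p ∧
              s = {p, C (p.coeff 0)⁻¹ * p.reverse}}.ncard : ℤ)
        = ({p : F[X] | Irreducible p ∧ p.Monic ∧ p.natDegree = n ∧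
              p.coeff 0 ≠ 0}.ncard : ℤ)) := by
  refine ⟨?_, fun n hn => ?_⟩
  · have h := ncard_selfReciprocalIrreducibles_add_ncard_reciprocalPairs (F := F) 1
    rw [ncard_nonexceptionalIrreducibles_one (FiniteField.two_ne_neg_two_of_odd_card hq)] at h
    have hcard : 2 ≤ Fintype.card F := Fintype.one_lt_card
    change ((selfReciprocalIrreducibles F 1).ncard : ℤ) + (reciprocalPairs F 1).ncard = _
    rw [ncard_setOf_irreducible_natDegree_one]
    omega
  · have h := ncard_selfReciprocalIrreducibles_add_ncard_reciprocalPairs (F := F) n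
    rw [nonexceptionalIrreducibles_eq hn] at h
    change ((selfReciprocalIrreducibles F n).ncard : ℤ) + (reciprocalPairs F n).ncard = _
    exact_mod_cast h
end

section
/- In the ring of formal power series over Z[q], the product ∏_{n ≥ 1} (1 − x^n)^{I_n(q)} equals (1 − qx)/(1 − x), where I_n(q) = (1/n) ∑_{d | n} μ(d)(q^{n/d} − 1). -/
/-!
Take logarithmic derivatives with respect to the Euler operator `θ = X d/dX`. Since
`θ log (1 - X^n) = -∑_{k ≥ 1} n X^{nk}`, the `m`-th coefficient of `θ log` of the left-hand
side is `-∑_{d ∣ m} d I_d - 1`, which Möbius inversion turns into `-q^m`, the `m`-th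
coefficient of `θ log (1 - qX)`. Two series with the same nonzero constant term whose
logarithmic derivatives agree below `X^(N+1)` agree below `X^(N+1)`: if `F - G = X^n K`,
the Wronskian `θF · G - F · θG` is `X^n (n K(0) G(0) + O(X))`.
-/

open PowerSeries Finset

namespace Derivation

variable {R A : Type*} [CommSemiring R] [CommRing A] [Algebra R A] (D : Derivation R A A)

-- `Ring.inverse` is `0` off the units, hence the unit hypotheses below.
noncomputable def logDeriv (a : A) : A := D a * Ring.inverse a

theorem logDeriv_one : D.logDeriv 1 = 0 := by
  simp [logDeriv]

theorem logDeriv_mul {a b : A} (ha : IsUnit a) (hb : IsUnit b) :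
    D.logDeriv (a * b) = D.logDeriv a + D.logDeriv b := by
  simp only [logDeriv, leibniz, smul_eq_mul, Ring.mul_inverse_rev]
  linear_combination (D b * Ring.inverse b) * Ring.mul_inverse_cancel a ha
    + (D a * Ring.inverse a) * Ring.mul_inverse_cancel b hb

theorem logDeriv_pow {a : A} (ha : IsUnit a) (k : ℕ) :
    D.logDeriv (a ^ k) = k * D.logDeriv a := by
  induction k with
  | zero => simp [logDeriv_one]
  | succ k ih => rw [pow_succ, D.logDeriv_mul (ha.pow k) ha, ih]; push_cast; ring

theorem logDeriv_prod {ι : Type*} (s : Finset ι) {f : ι → A} (hf : ∀ i ∈ s, IsUnit (f i)) :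
    D.logDeriv (∏ i ∈ s, f i) = ∑ i ∈ s, D.logDeriv (f i) := by
  classical
  induction s using Finset.induction_on with
  | empty => simp [logDeriv_one]
  | insert i s hi ih =>
    rw [prod_insert hi, sum_insert hi, D.logDeriv_mul (hf i (mem_insert_self i s))
      (IsUnit.prod_iff.mpr fun j hj => hf j (mem_insert_of_mem hj)),
      ih fun j hj => hf j (mem_insert_of_mem hj)]

theorem logDeriv_eq_of_mul_eq_one {a b : A} (h : a * b = 1) : D.logDeriv a = D a * b := by
  rw [logDeriv, ← mul_one (Ring.inverse a), ← h,
    Ring.inverse_mul_cancel_left a b (IsUnit.of_mul_eq_one b h)]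

theorem apply_mul_sub_mul_apply {a b : A} (ha : IsUnit a) (hb : IsUnit b) :
    D a * b - a * D b = a * b * (D.logDeriv a - D.logDeriv b) := by
  simp only [logDeriv]
  linear_combination (-(D a * b)) * Ring.mul_inverse_cancel a ha
    + (a * D b) * Ring.mul_inverse_cancel b hb

end Derivation

theorem sum_divisors_eq_of_eq_sum_moebius_mul {R : Type*} [NonAssocRing R] {f g : ℕ → R}
    (h : ∀ n > 0, f n = ∑ d ∈ n.divisors, (ArithmeticFunction.moebius d : R) * g (n / d)) :
    ∀ n > 0, ∑ d ∈ n.divisors, f d = g n :=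
  ArithmeticFunction.sum_eq_iff_sum_mul_moebius_eq.mpr fun n hn => by
    rw [Nat.sum_divisorsAntidiagonal (fun a b => (ArithmeticFunction.moebius a : R) * g b),
      h n hn]

namespace PowerSeries

variable {R : Type*} [CommRing R]

noncomputable def eulerOp : Derivation R R⟦X⟧ R⟦X⟧ := (X : R⟦X⟧) • d⁄dX R

theorem eulerOp_apply (f : R⟦X⟧) : eulerOp f = X * d⁄dX R f := rfl

theorem eulerOp_X_pow (n : ℕ) : eulerOp (X ^ n : R⟦X⟧) = (n : R⟦X⟧) * X ^ n := by
  rcases n with _ | n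
  · simp
  · rw [Derivation.leibniz_pow, eulerOp_apply, derivative_X]
    simp only [nsmul_eq_mul, smul_eq_mul]
    push_cast
    ring

theorem constantCoeff_eulerOp (f : R⟦X⟧) : constantCoeff (eulerOp f) = 0 := by
  simp [eulerOp_apply]

theorem trunc_eq_trunc_of_X_pow_dvd_sub {f g : R⟦X⟧} {n : ℕ} (h : X ^ n ∣ f - g) :
    trunc n f = trunc n g := by
  ext m
  rw [coeff_trunc, coeff_trunc]
  split_ifs with hm
  · rw [← sub_eq_zero, ← map_sub]
    exact X_pow_dvd_iff.mp h m hm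
  · rfl

theorem X_pow_dvd_sub_of_X_pow_dvd_wronskian [IsDomain R] [CharZero R] {F G : R⟦X⟧} {N : ℕ}
    (hG : constantCoeff G ≠ 0) (h0 : constantCoeff F = constantCoeff G)
    (hW : X ^ N ∣ eulerOp F * G - F * eulerOp G) : X ^ N ∣ F - G := by
  suffices ∀ n ≤ N, X ^ n ∣ F - G from this N le_rfl
  intro n
  induction n with
  | zero => simp
  | succ n ih =>
    intro hn
    obtain ⟨K, hK⟩ := ih (by omega)
    rcases Nat.eq_zero_or_pos n with rfl | hn0
    · rw [pow_one, X_dvd_iff, map_sub, h0, sub_self]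
    have hWK : eulerOp F * G - F * eulerOp G
        = X ^ n * (eulerOp K * G + (n : R⟦X⟧) * K * G - K * eulerOp G) := by
      have : eulerOp F * G - F * eulerOp G
          = eulerOp (F - G) * G - (F - G) * eulerOp G := by rw [map_sub]; ring
      rw [this, hK, Derivation.leibniz, eulerOp_X_pow, smul_eq_mul, smul_eq_mul]
      ring
    have hX : X ∣ eulerOp K * G + (n : R⟦X⟧) * K * G - K * eulerOp G := by
      rw [← mul_dvd_mul_iff_left (pow_ne_zero n (X_ne_zero (R := R))), ← pow_succ, ← hWK]
      exact (pow_dvd_pow X hn).trans hW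
    have hK0 : constantCoeff K = 0 := by
      rw [X_dvd_iff] at hX
      simpa [constantCoeff_eulerOp, hG, hn0.ne'] using hX
    rw [hK, pow_succ]
    exact mul_dvd_mul_left _ (X_dvd_iff.mpr hK0)

theorem one_sub_X_pow_mul_expand_mk_one {n : ℕ} (hn : n ≠ 0) :
    (1 - X ^ n : R⟦X⟧) * expand n hn (mk 1) = 1 := by
  simpa [mul_comm] using congrArg (expand n hn) (mk_one_mul_one_sub_eq_one R)

theorem one_sub_C_mul_X_mul_rescale_mk_one (a : R) :
    (1 - C a * X) * rescale a (mk 1) = 1 := by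
  simpa [mul_comm] using congrArg (rescale a) (mk_one_mul_one_sub_eq_one R)

theorem isUnit_one_sub_X_pow {n : ℕ} (hn : n ≠ 0) : IsUnit (1 - X ^ n : R⟦X⟧) :=
  IsUnit.of_mul_eq_one _ (one_sub_X_pow_mul_expand_mk_one hn)

theorem coeff_eulerOp_logDeriv_one_sub_X_pow {n : ℕ} (hn : n ≠ 0) (m : ℕ) :
    coeff m (eulerOp.logDeriv (1 - X ^ n : R⟦X⟧))
      = if n ∈ m.divisors then -(n : R) else 0 := by
  have h := one_sub_X_pow_mul_expand_mk_one (R := R) hn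
  have hL : eulerOp.logDeriv (1 - X ^ n : R⟦X⟧)
      = (n : R⟦X⟧) * (1 - expand n hn (mk 1)) := by
    rw [eulerOp.logDeriv_eq_of_mul_eq_one h, map_sub, eulerOp_X_pow, Derivation.map_one_eq_zero]
    linear_combination (n : R⟦X⟧) * h
  rw [hL, ← map_natCast (C (R := R)), coeff_C_mul, map_sub, coeff_one, coeff_expand]
  rcases eq_or_ne m 0 with rfl | hm
  · simp
  · by_cases hnm : n ∣ m <;> simp [hm, hnm]

theorem coeff_eulerOp_logDeriv_one_sub_C_mul_X (a : R) (m : ℕ) :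
    coeff m (eulerOp.logDeriv (1 - C a * X)) = if m = 0 then 0 else -a ^ m := by
  have h := one_sub_C_mul_X_mul_rescale_mk_one a
  have hL : eulerOp.logDeriv (1 - C a * X) = 1 - rescale a (mk 1) := by
    rw [eulerOp.logDeriv_eq_of_mul_eq_one h, map_sub, Derivation.map_one_eq_zero,
      Derivation.leibniz, eulerOp_apply, eulerOp_apply, derivative_C, derivative_X]
    simp only [smul_eq_mul]
    linear_combination h
  rw [hL, map_sub, coeff_one, coeff_rescale, coeff_mk]
  split_ifs <;> simp_all

theorem isUnit_prod_one_sub_X_pow (e : ℕ → ℕ) (N : ℕ) :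
    IsUnit (∏ n ∈ Icc 1 N, (1 - X ^ n : R⟦X⟧) ^ e n) :=
  IsUnit.prod_iff.mpr fun _ hn =>
    (isUnit_one_sub_X_pow (Nat.one_le_iff_ne_zero.mp (mem_Icc.mp hn).1)).pow _

theorem constantCoeff_prod_one_sub_X_pow (e : ℕ → ℕ) (N : ℕ) :
    constantCoeff (∏ n ∈ Icc 1 N, (1 - X ^ n : R⟦X⟧) ^ e n) = 1 := by
  simp only [map_prod, map_pow, map_sub, map_one, constantCoeff_X]
  exact prod_eq_one fun n hn => by
    rw [zero_pow (Nat.one_le_iff_ne_zero.mp (mem_Icc.mp hn).1), sub_zero, one_pow]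

theorem coeff_eulerOp_logDeriv_prod_one_sub_X_pow (e : ℕ → ℕ) {N m : ℕ} (hm : m ≤ N) :
    coeff m (eulerOp.logDeriv (∏ n ∈ Icc 1 N, (1 - X ^ n : R⟦X⟧) ^ e n))
      = -∑ d ∈ m.divisors, (d * e d : R) := by
  have hunit : ∀ n ∈ Icc 1 N, IsUnit (1 - X ^ n : R⟦X⟧) := fun n hn =>
    isUnit_one_sub_X_pow (Nat.one_le_iff_ne_zero.mp (mem_Icc.mp hn).1)
  rw [eulerOp.logDeriv_prod _ fun n hn => (hunit n hn).pow _, map_sum,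
    sum_congr rfl fun n hn => by
      rw [eulerOp.logDeriv_pow (hunit n hn), ← map_natCast (C (R := R)), coeff_C_mul,
        coeff_eulerOp_logDeriv_one_sub_X_pow (Nat.one_le_iff_ne_zero.mp (mem_Icc.mp hn).1),
        mul_ite, mul_zero],
    sum_ite_mem, inter_eq_right.mpr, ← sum_neg_distrib]
  · exact sum_congr rfl fun d _ => by ring
  · intro d hd
    have := Nat.divisor_le hd
    have := Nat.pos_of_mem_divisors hd
    simp only [mem_Icc]
    omega

end PowerSeries

/-- `(1 − qx)/(1 − x)` is cleared of its denominator, and the infinite product is compared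
modulo `x^(N+1)`, where only its factors with `n ≤ N` matter. -/
theorem prod_one_sub_pow_IM_general (q : ℕ) (I : ℕ → ℕ)
    (hI : ∀ n : ℕ, 1 ≤ n → (n : ℤ) * I n
      = ∑ d ∈ n.divisors,
          (ArithmeticFunction.moebius d : ℤ) * ((q : ℤ) ^ (n / d) - 1))
    (N : ℕ) :
    PowerSeries.trunc (N + 1)
        (((∏ n ∈ Finset.Icc 1 N, (1 - (PowerSeries.X : PowerSeries ℤ) ^ n) ^ I n)
          * (1 - PowerSeries.X)))
      = PowerSeries.trunc (N + 1)
          (1 - PowerSeries.C (q : ℤ) * PowerSeries.X) := by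
  have hsum : ∀ m > 0, ∑ d ∈ m.divisors, (d * I d : ℤ) = (q : ℤ) ^ m - 1 :=
    sum_divisors_eq_of_eq_sum_moebius_mul hI
  set P := ∏ n ∈ Icc 1 N, (1 - X ^ n : ℤ⟦X⟧) ^ I n
  have hP : IsUnit P := isUnit_prod_one_sub_X_pow I N
  have hX : IsUnit (1 - X : ℤ⟦X⟧) := by
    simpa using isUnit_one_sub_X_pow (R := ℤ) one_ne_zero
  have hB : IsUnit (1 - C (q : ℤ) * X) :=
    IsUnit.of_mul_eq_one _ (one_sub_C_mul_X_mul_rescale_mk_one _)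
  apply trunc_eq_trunc_of_X_pow_dvd_sub
  refine X_pow_dvd_sub_of_X_pow_dvd_wronskian (by simp)
    (by rw [map_mul, constantCoeff_prod_one_sub_X_pow]; simp) ?_
  rw [eulerOp.apply_mul_sub_mul_apply (hP.mul hX) hB]
  refine Dvd.dvd.mul_left (X_pow_dvd_iff.mpr fun m hm => ?_) _
  have hX1 := coeff_eulerOp_logDeriv_one_sub_X_pow (R := ℤ) one_ne_zero m
  rw [pow_one] at hX1
  rw [eulerOp.logDeriv_mul hP hX, map_sub, map_add,
    coeff_eulerOp_logDeriv_prod_one_sub_X_pow I (by omega), hX1,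
    coeff_eulerOp_logDeriv_one_sub_C_mul_X]
  rcases Nat.eq_zero_or_pos m with rfl | hm0
  · simp
  · rw [hsum m hm0, if_pos (Nat.one_mem_divisors.mpr hm0.ne'), if_neg hm0.ne']
    ring

/-- In formal power series, `∏_{n ≥ 1} (1 − x^n)^{I_n(q)} = (1 − qx)/(1 − x)`,
where `I_n(q) = (1/n) ∑_{d ∣ n} μ(d)(q^{n/d} − 1)`: equivalently, multiplying
through by `1 - x`, every truncation of `(∏_{n=1}^N (1 − x^n)^{I_n}) · (1 − x)`
agrees with that of `1 − qx`. -/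
theorem prod_one_sub_pow_IM (q : ℕ) (hq : 1 ≤ q) (I : ℕ → ℕ)
    (hI : ∀ n : ℕ, 1 ≤ n → (n : ℤ) * I n
      = ∑ d ∈ n.divisors,
          (ArithmeticFunction.moebius d : ℤ) * ((q : ℤ) ^ (n / d) - 1))
    (N : ℕ) :
    PowerSeries.trunc (N + 1)
        (((∏ n ∈ Finset.Icc 1 N, (1 - (PowerSeries.X : PowerSeries ℤ) ^ n) ^ I n)
          * (1 - PowerSeries.X)))
      = PowerSeries.trunc (N + 1)
          (1 - PowerSeries.C (q : ℤ) * PowerSeries.X) :=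
  prod_one_sub_pow_IM_general q I hI N
end

section
/- For any rational polynomial m ∈ Q[q] and any positive integer n, the sum over all partitions λ of n of the multinomial coefficient binom(m; E(λ)) equals binom(m+n−1, n), where E(λ) is the multiset of multiplicities of λ and binom(m; k_1,…,k_s) = m(m−1)⋯(m+1−∑k_i)/(k_1!⋯k_s!). -/
/-!
Writing `ℓ` for the length of `λ`, the summand is `(ℓ! / ∏_b E(λ,b)!) · binom(m, ℓ)`, and
`ℓ! / ∏_b E(λ,b)!` counts the compositions of `n` that rearrange to `λ`. Hence the left side is
`∑_c binom(m, ℓ(c))` over all compositions `c` of `n`. Compositions with `k + 1` parts correspond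
to the `k`-subsets of the `n - 1` inner cut points, so by Chu–Vandermonde the sum is
`∑_k binom(n-1, k) binom(m, k+1) = binom(m+n-1, n)`. All of this holds in any binomial ring, so no
reduction to integer values of `m` is needed.
-/

open Polynomial Finset Nat

namespace Multiset

variable {α : Type*} [DecidableEq α]

theorem mem_toFinset_lists {s : Multiset α} {l : List α} :
    l ∈ s.lists.toFinset ↔ (l : Multiset α) = s := by
  rw [mem_toFinset, mem_lists_iff, eq_comm]
  rfl

theorem count_mul_prod_factorial_count_erase {s : Multiset α} {a : α} (h : a ∈ s) :
    s.count a * ∏ b ∈ (s.erase a).toFinset, ((s.erase a).count b)! =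
      ∏ b ∈ s.toFinset, (s.count b)! := by
  have ha : a ∈ s.toFinset := mem_toFinset.mpr h
  rw [prod_subset (toFinset_subset.mpr (erase_subset a s)) fun b _ hb => by
      rw [count_eq_zero_of_notMem (mt mem_toFinset.mpr hb), factorial_zero],
    ← mul_prod_erase _ _ ha, ← mul_prod_erase _ _ ha, count_erase_self, ← mul_assoc,
    mul_factorial_pred (count_pos.mpr h).ne']
  congr 1
  exact prod_congr rfl fun b hb => by rw [count_erase_of_ne (Finset.ne_of_mem_erase hb)]

theorem toFinset_lists_eq_biUnion {s : Multiset α} (hs : s ≠ 0) :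
    s.lists.toFinset = s.toFinset.biUnion fun a =>
      (s.erase a).lists.toFinset.map ⟨(a :: ·), List.cons_injective⟩ := by
  ext (_ | ⟨a, l⟩)
  · simpa [mem_toFinset_lists, eq_comm] using hs
  · simp only [mem_toFinset_lists, mem_biUnion, Finset.mem_map, Function.Embedding.coeFn_mk,
      List.cons.injEq]
    constructor
    · rintro rfl
      exact ⟨a, by simp, l, by simp, rfl, rfl⟩
    · rintro ⟨a, ha, l, hl, rfl, rfl⟩
      rw [← cons_erase (mem_toFinset.mp ha), ← hl]
      rfl

theorem card_toFinset_lists_mul_prod_factorial (s : Multiset α) :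
    #s.lists.toFinset * ∏ b ∈ s.toFinset, (s.count b)! = (card s)! := by
  induction h : card s generalizing s with
  | zero =>
    rw [card_eq_zero.mp h, ← coe_nil, lists_coe]
    simp
  | succ k ih =>
    have hs : s ≠ 0 := by rintro rfl; simp at h
    rw [toFinset_lists_eq_biUnion hs, card_biUnion, sum_mul]
    · calc ∑ a ∈ s.toFinset, #((s.erase a).lists.toFinset.map _) * ∏ b ∈ s.toFinset, (s.count b)!
          = ∑ a ∈ s.toFinset, s.count a * k ! := sum_congr rfl fun a ha => by
            have ha := mem_toFinset.mp ha
            rw [Finset.card_map, ← count_mul_prod_factorial_count_erase ha, mul_left_comm,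
              ih _ (by rw [card_erase_of_mem ha, h]; rfl)]
        _ = (k + 1)! := by rw [← sum_mul, toFinset_sum_count_eq, h, factorial_succ]
    · intro a _ b _ hab
      simp only [Function.onFun, Finset.disjoint_left, Finset.mem_map]
      rintro _ ⟨l, _, rfl⟩ ⟨l', _, h⟩
      exact hab (List.cons_eq_cons.mp h).1.symm

end Multiset

namespace Nat.Partition

theorem card_filter_ofComposition_eq {n : ℕ} (P : n.Partition) :
    #{c : Composition n | ofComposition n c = P} = #P.parts.lists.toFinset := by
  have hfiber (c : Composition n) : ofComposition n c = P ↔ (c.blocks : Multiset ℕ) = P.parts :=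
    Partition.ext_iff
  refine card_bij (fun c _ => c.blocks) (fun c hc => ?_) (fun c _ d _ h => Composition.ext h)
    fun l hl => ?_
  · rw [mem_filter, hfiber] at hc
    exact Multiset.mem_toFinset_lists.mpr hc.2
  · have hl := Multiset.mem_toFinset_lists.mp hl
    refine ⟨⟨l, fun hi => P.parts_pos (hl ▸ hi), by rw [← Multiset.sum_coe, hl, P.parts_sum]⟩,
      by simpa [hfiber] using hl, rfl⟩

theorem sum_card_lists_nsmul_eq_sum_composition {M : Type*} [AddCommMonoid M] (n : ℕ) (f : ℕ → M) :
    ∑ P : n.Partition, #P.parts.lists.toFinset • f (Multiset.card P.parts) =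
      ∑ c : Composition n, f c.length := by
  rw [← sum_fiberwise univ (ofComposition n) fun c => f c.length]
  refine sum_congr rfl fun P _ => ?_
  rw [← card_filter_ofComposition_eq, ← sum_const]
  refine (sum_congr rfl fun c hc => ?_).symm
  rw [← (mem_filter.mp hc).2]
  simp [ofComposition]

end Nat.Partition

theorem CompositionAsSet.card_compositionAsSetEquiv_add_one {n : ℕ}
    (d : CompositionAsSet (n + 1)) : #(compositionAsSetEquiv (n + 1) d) + 1 = d.length := by
  have hinner :
      #(compositionAsSetEquiv (n + 1) d) = #((d.boundaries.erase 0).erase (Fin.last _)) := by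
    refine card_bij (fun i _ => ⟨1 + i, by omega⟩) (fun i hi => ?_)
      (fun i _ j _ h => by simpa [Fin.ext_iff] using h) fun j hj => ?_
    · simp only [compositionAsSetEquiv, Equiv.coe_fn_mk, Set.mem_toFinset,
        Set.mem_ofPred_eq] at hi
      simp only [mem_erase, ne_eq, Fin.ext_iff, Fin.val_last, Fin.val_zero]
      exact ⟨by omega, by omega, hi⟩
    · simp only [mem_erase, ne_eq, Fin.ext_iff, Fin.val_last, Fin.val_zero] at hj
      refine ⟨⟨j - 1, by omega⟩, ?_, Fin.ext (by simp; omega)⟩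
      simp only [compositionAsSetEquiv, Equiv.coe_fn_mk, Set.mem_toFinset, Set.mem_ofPred_eq]
      convert hj.2.2
      omega
  have h0 : (0 : Fin (n + 2)) ∈ d.boundaries := d.zero_mem
  have hlast : Fin.last (n + 1) ∈ d.boundaries.erase 0 :=
    mem_erase.mpr ⟨by simp [Fin.ext_iff], d.getLast_mem⟩
  have hcard := d.card_boundaries_eq_succ_length
  have hpos := card_pos.mpr ⟨_, hlast⟩
  rw [card_erase_of_mem h0] at hpos
  rw [hinner, card_erase_of_mem hlast, card_erase_of_mem h0]
  omega

section BinomialRing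

variable {R : Type*} [CommRing R] [BinomialRing R]

theorem Composition.sum_choose_length (m : R) (n : ℕ) :
    ∑ c : Composition (n + 1), Ring.choose m c.length = Ring.choose (m + n) (n + 1) := by
  calc ∑ c : Composition (n + 1), Ring.choose m c.length
      = ∑ S : Finset (Fin n), Ring.choose m (#S + 1) := by
        refine Fintype.sum_equiv ((compositionEquiv _).trans (compositionAsSetEquiv _)) _ _
          fun c => ?_
        rw [Equiv.trans_apply, CompositionAsSet.card_compositionAsSetEquiv_add_one]
        simp [compositionEquiv]
    _ = ∑ k ∈ range (n + 1), n.choose k • Ring.choose m (k + 1) := by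
        rw [← powerset_univ, sum_powerset_apply_card (fun k => Ring.choose m (k + 1)),
          Finset.card_univ, Fintype.card_fin]
    _ = ∑ k ∈ range (n + 2), Ring.choose m k * Ring.choose (n : R) (n + 1 - k) := by
        rw [sum_range_succ' _ (n + 1), Nat.sub_zero, Ring.choose_natCast, Nat.choose_succ_self,
          Nat.cast_zero, mul_zero, add_zero]
        refine sum_congr rfl fun k hk => ?_
        rw [nsmul_eq_mul, mul_comm, Ring.choose_natCast,
          ← Nat.choose_symm (Nat.lt_succ_iff.mp (mem_range.mp hk)), Nat.add_sub_add_right]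
    _ = Ring.choose (m + n) (n + 1) := by
        rw [Ring.add_choose_eq _ (Commute.all _ _), Nat.sum_antidiagonal_eq_sum_range_succ_mk]

theorem prod_range_sub_eq_factorial_nsmul_choose (m : R) (k : ℕ) :
    ∏ i ∈ range k, (m - i) = k ! • Ring.choose m k := by
  rw [← Ring.descPochhammer_eq_factorial_smul_choose, ← aeval_eq_smeval,
    ← descPochhammer_eval_eq_prod_range, ← eval_map_algebraMap, descPochhammer_map]

end BinomialRing

/-- For any rational polynomial `m ∈ ℚ[q]` and any positive integer `n`,
`∑_{λ ⊢ n} binom(m; E(λ)) = binom(m+n−1, n)`, where `E(λ)` is the multiset of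
multiplicities of `λ` and `binom(m; k_1,…,k_s) = m(m−1)⋯(m+1−∑k_i)/(k_1!⋯k_s!)`. -/
theorem partition_multinomial_sum (n : ℕ) (hn : 1 ≤ n) (m : ℚ[X]) :
    ∑ P : n.Partition,
        ((∏ b ∈ P.parts.toFinset, ((P.parts.count b).factorial : ℚ))⁻¹ •
          ∏ i ∈ Finset.range (Multiset.card P.parts), (m - (i : ℚ[X])))
      = ((n.factorial : ℚ))⁻¹ •
          ∏ i ∈ Finset.range n, (m + (n : ℚ[X]) - 1 - (i : ℚ[X])) := by
  obtain ⟨n, rfl⟩ := Nat.exists_eq_add_of_le' hn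
  have hterm (P : (n + 1).Partition) :
      (∏ b ∈ P.parts.toFinset, ((P.parts.count b)! : ℚ))⁻¹ •
          ∏ i ∈ range (Multiset.card P.parts), (m - (i : ℚ[X])) =
        #P.parts.lists.toFinset • Ring.choose m (Multiset.card P.parts) := by
    have hcoef : (∏ b ∈ P.parts.toFinset, ((P.parts.count b)! : ℚ))⁻¹ *
        (Multiset.card P.parts)! = #P.parts.lists.toFinset := by
      rw [← P.parts.card_toFinset_lists_mul_prod_factorial]
      push_cast
      field_simp
    rw [prod_range_sub_eq_factorial_nsmul_choose, ← Nat.cast_smul_eq_nsmul ℚ, smul_smul, hcoef,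
      Nat.cast_smul_eq_nsmul]
  have hsum : m + ((n + 1 : ℕ) : ℚ[X]) - 1 = m + (n : ℚ[X]) := by push_cast; ring
  rw [sum_congr rfl fun P _ => hterm P, Nat.Partition.sum_card_lists_nsmul_eq_sum_composition,
    Composition.sum_choose_length, hsum, prod_range_sub_eq_factorial_nsmul_choose,
    ← Nat.cast_smul_eq_nsmul ℚ, inv_smul_smul₀ (by positivity)]
end
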